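/- arXiv:2307.11738 — 9 statements merged into one kernel-verified Lean document; each statement's English description precedes it below -/
import Mathlib

section
/- Let f : [0,1] → ℝ be continuous. Then f is completely non-Hölder if and only if for every non-constant real polynomial P, the function P ∘ f has at no point x₀ ∈ [0,1] a one-sided derivative equal to 0. -/
open Filter Set Topology MeasureTheory ProbabilityTheory

/-- The tent function: `2x` on `[0,1/2]`, `2-2x` on `[1/2,1]`, `0` outside `[0,1]`. -/
noncomputable def tent (x : ℝ) : ℝ :=
  if x ≤ 0 ∨ 1 ≤ x then 0 else if x ≤ 1 / 2 then 2 * x else 2 - 2 * x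

/-- The Faber–Schauder system `σ_{n,i}(x) = σ(2^n x - i)`. -/
noncomputable def fs (n i : ℕ) (x : ℝ) : ℝ := tent (2 ^ n * x - i)

/-- `f` is `α`-Hölder at `x₀` from the right (within `[0,1]`):
`limsup_{y ↘ x₀} |f y - f x₀| / |y - x₀|^α < ∞`. -/
def HolderRightAt (f : ℝ → ℝ) (α x₀ : ℝ) : Prop :=
  ∃ C : ℝ, ∀ᶠ y in nhdsWithin x₀ (Set.Ioc x₀ 1), |f y - f x₀| / |y - x₀| ^ α ≤ C

/-- `f` is `α`-Hölder at `x₀` from the left (within `[0,1]`). -/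
def HolderLeftAt (f : ℝ → ℝ) (α x₀ : ℝ) : Prop :=
  ∃ C : ℝ, ∀ᶠ y in nhdsWithin x₀ (Set.Ico 0 x₀), |f y - f x₀| / |y - x₀| ^ α ≤ C

/-- `f` is completely non-Hölder on `[0,1]`: at no point is it one-sided `α`-Hölder
for any `α ∈ (0,1]` (from the right at points `< 1`, from the left at points `> 0`). -/
def CompletelyNonHolder (f : ℝ → ℝ) : Prop :=
  ∀ x₀ ∈ Set.Icc (0 : ℝ) 1, ∀ α ∈ Set.Ioc (0 : ℝ) 1,
    (x₀ < 1 → ¬ HolderRightAt f α x₀) ∧ (0 < x₀ → ¬ HolderLeftAt f α x₀)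

/-!
If `P` is non-constant and `c = f x₀`, then near `c` we have `|P t - P c| ≥ m |t - c| ^ k` with
`k ≥ 1` the multiplicity of `c` as a root of `P - P c`. Hence a vanishing one-sided derivative of
`P ∘ f` forces `|f y - f x₀| ≲ |y - x₀| ^ (1/k)`. Conversely, if `|f y - f x₀| ≲ |y - x₀| ^ α`,
then `P = (X - f x₀) ^ n` with `n α > 1` makes `P ∘ f` have one-sided derivative `0`.
-/

open Polynomial

theorem Polynomial.exists_pow_le_norm_eval_sub {𝕜 : Type*} [NormedField 𝕜] {P : 𝕜[X]}
    (hP : 0 < P.degree) (c : 𝕜) :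
    ∃ k : ℕ, 0 < k ∧ ∃ m : ℝ, 0 < m ∧ ∀ᶠ t in 𝓝 c, m * ‖t - c‖ ^ k ≤ ‖P.eval t - P.eval c‖ := by
  set g := P - C (P.eval c)
  have hg : g ≠ 0 := by
    intro h
    rw [sub_eq_zero] at h
    exact hP.not_ge (h ▸ degree_C_le)
  set k := g.rootMultiplicity c
  set q := g /ₘ (X - C c) ^ k
  have hfactor (t : 𝕜) : P.eval t - P.eval c = (t - c) ^ k * q.eval t := by
    simpa [g] using (congrArg (eval t) (pow_mul_divByMonic_rootMultiplicity_eq g c)).symm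
  have hq : 0 < ‖q.eval c‖ := norm_pos_iff.2 (eval_divByMonic_pow_rootMultiplicity_ne_zero c hg)
  refine ⟨k, (rootMultiplicity_pos hg).2 (by simp [g]), ‖q.eval c‖ / 2, by positivity, ?_⟩
  have hq_near : ∀ᶠ t in 𝓝 c, ‖q.eval c‖ / 2 < ‖q.eval t‖ :=
    (q.continuous.norm.tendsto c).eventually_const_lt (half_lt_self hq)
  filter_upwards [hq_near] with t ht
  rw [hfactor, norm_mul, norm_pow, mul_comm]
  gcongr

theorem div_rpow_inv_le_of_mul_pow_le {a b m : ℝ} {k : ℕ} (ha : 0 ≤ a) (hb : 0 < b) (hm : 0 < m)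
    (hk : k ≠ 0) (h : m * a ^ k ≤ b) : a / b ^ (k : ℝ)⁻¹ ≤ (m ^ (k : ℝ)⁻¹)⁻¹ := by
  rw [div_le_iff₀ (by positivity), ← div_eq_inv_mul, ← Real.div_rpow hb.le hm.le]
  calc a = (a ^ k) ^ (k : ℝ)⁻¹ := (Real.pow_rpow_inv_natCast ha hk).symm
    _ ≤ (b / m) ^ (k : ℝ)⁻¹ := by gcongr; rw [le_div_iff₀ hm]; linarith

section OneSided

variable {f : ℝ → ℝ} {x₀ : ℝ} {l : Filter ℝ}

theorem exists_holder_of_tendsto_polynomial_slope (hl : l ≤ 𝓝[≠] x₀)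
    (hf : Tendsto f l (𝓝 (f x₀))) {P : ℝ[X]} (hP : 0 < P.degree)
    (hslope : Tendsto (fun y => (P.eval (f y) - P.eval (f x₀)) / (y - x₀)) l (𝓝 0)) :
    ∃ k : ℕ, 0 < k ∧ ∃ C, ∀ᶠ y in l, |f y - f x₀| / |y - x₀| ^ (k : ℝ)⁻¹ ≤ C := by
  obtain ⟨k, hk, m, hm, hlower⟩ := P.exists_pow_le_norm_eval_sub hP (f x₀)
  refine ⟨k, hk, (m ^ (k : ℝ)⁻¹)⁻¹, ?_⟩
  have hsmall : ∀ᶠ y in l, |(P.eval (f y) - P.eval (f x₀)) / (y - x₀)| < 1 :=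
    hslope.abs.eventually (gt_mem_nhds (by simp))
  filter_upwards [hf.eventually hlower, hl self_mem_nhdsWithin, hsmall] with y hy hne hsmall
  have hb : 0 < |y - x₀| := abs_pos.2 (sub_ne_zero.2 hne)
  rw [abs_div, div_lt_one hb] at hsmall
  simp only [Real.norm_eq_abs] at hy
  exact div_rpow_inv_le_of_mul_pow_le (abs_nonneg _) hb hm hk.ne' (by linarith)

theorem exists_tendsto_pow_slope_of_holder (hl : l ≤ 𝓝[≠] x₀) {α C : ℝ} (hα : 0 < α)
    (hH : ∀ᶠ y in l, |f y - f x₀| / |y - x₀| ^ α ≤ C) :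
    ∃ n : ℕ, 0 < n ∧ Tendsto (fun y => (f y - f x₀) ^ n / (y - x₀)) l (𝓝 0) := by
  obtain ⟨n, hn⟩ := exists_nat_gt α⁻¹
  have hn0 : 0 < n := by exact_mod_cast (inv_pos.2 hα).trans hn
  have hnα : 0 < n * α - 1 := by rw [inv_lt_iff_one_lt_mul₀ hα] at hn; linarith
  refine ⟨n, hn0, ?_⟩
  set D := max C 0
  have hdist : Tendsto (fun y => |y - x₀|) l (𝓝 0) := by
    simpa using ((tendsto_id.sub_const x₀).abs).mono_left (hl.trans nhdsWithin_le_nhds)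
  have hbound : Tendsto (fun y => D ^ n * |y - x₀| ^ (n * α - 1)) l (𝓝 0) := by
    simpa [Real.zero_rpow hnα.ne'] using
      ((Real.continuousAt_rpow_const 0 _ (Or.inr hnα.le)).tendsto.comp hdist).const_mul (D ^ n)
  rw [tendsto_zero_iff_abs_tendsto_zero]
  refine squeeze_zero' (Eventually.of_forall fun _ => abs_nonneg _) ?_ hbound
  filter_upwards [hl self_mem_nhdsWithin, hH] with y hne hy
  have hb : 0 < |y - x₀| := abs_pos.2 (sub_ne_zero.2 hne)
  have hholder : |f y - f x₀| ≤ D * |y - x₀| ^ α := by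
    rw [div_le_iff₀ (by positivity)] at hy
    exact hy.trans (mul_le_mul_of_nonneg_right (le_max_left _ _) (by positivity))
  calc |(f y - f x₀) ^ n / (y - x₀)| = |f y - f x₀| ^ n / |y - x₀| := by rw [abs_div, abs_pow]
    _ ≤ (D * |y - x₀| ^ α) ^ n / |y - x₀| := by gcongr
    _ = D ^ n * |y - x₀| ^ (n * α - 1) := by
      rw [mul_pow, ← Real.rpow_mul_natCast hb.le, Real.rpow_sub hb, Real.rpow_one, mul_comm α,
        mul_div_assoc]

theorem exists_holder_iff_exists_polynomial_slope_tendsto_zero (hl : l ≤ 𝓝[≠] x₀)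
    (hf : Tendsto f l (𝓝 (f x₀))) :
    (∃ α ∈ Ioc (0 : ℝ) 1, ∃ C, ∀ᶠ y in l, |f y - f x₀| / |y - x₀| ^ α ≤ C) ↔
      ∃ P : ℝ[X], 0 < P.degree ∧
        Tendsto (fun y => (P.eval (f y) - P.eval (f x₀)) / (y - x₀)) l (𝓝 0) := by
  constructor
  · rintro ⟨α, hα, B, hH⟩
    obtain ⟨n, hn, hslope⟩ := exists_tendsto_pow_slope_of_holder hl hα.1 hH
    exact ⟨(X - C (f x₀)) ^ n, by simp [hn], by simpa [zero_pow hn.ne'] using hslope⟩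
  · rintro ⟨P, hP, hslope⟩
    obtain ⟨k, hk, hH⟩ := exists_holder_of_tendsto_polynomial_slope hl hf hP hslope
    exact ⟨(k : ℝ)⁻¹, ⟨by positivity, inv_le_one_of_one_le₀ (by exact_mod_cast hk)⟩, hH⟩

end OneSided

/-- a continuous `f` is completely non-Hölder iff for every non-constant
polynomial `P`, at no point of `[0,1]` does `P ∘ f` have a one-sided derivative equal to `0`. -/
theorem stmt2 (f : ℝ → ℝ) (hf : ContinuousOn f (Set.Icc 0 1)) :
    CompletelyNonHolder f ↔
      ∀ P : Polynomial ℝ, 0 < P.degree → ∀ x₀ ∈ Set.Icc (0 : ℝ) 1,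
        ¬ ((x₀ < 1 ∧ Tendsto (fun y => (P.eval (f y) - P.eval (f x₀)) / (y - x₀))
              (nhdsWithin x₀ (Set.Ioc x₀ 1)) (nhds 0)) ∨
           (0 < x₀ ∧ Tendsto (fun y => (P.eval (f y) - P.eval (f x₀)) / (y - x₀))
              (nhdsWithin x₀ (Set.Ico 0 x₀)) (nhds 0))) := by
  have holder_right_iff (x₀ : ℝ) (hx₀ : x₀ ∈ Icc (0 : ℝ) 1) :=
    exists_holder_iff_exists_polynomial_slope_tendsto_zero (f := f)
      (nhdsWithin_mono x₀ fun y hy => hy.1.ne')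
      ((hf x₀ hx₀).mono (Ioc_subset_Icc_self.trans (Icc_subset_Icc hx₀.1 le_rfl))).tendsto
  have holder_left_iff (x₀ : ℝ) (hx₀ : x₀ ∈ Icc (0 : ℝ) 1) :=
    exists_holder_iff_exists_polynomial_slope_tendsto_zero (f := f)
      (nhdsWithin_mono x₀ fun y hy => hy.2.ne)
      ((hf x₀ hx₀).mono (Ico_subset_Icc_self.trans (Icc_subset_Icc le_rfl hx₀.2))).tendsto
  constructor
  · rintro h P hP x₀ hx₀ (⟨hx₁, hslope⟩ | ⟨hx₀', hslope⟩)
    · obtain ⟨α, hα, hH⟩ := (holder_right_iff x₀ hx₀).2 ⟨P, hP, hslope⟩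
      exact (h x₀ hx₀ α hα).1 hx₁ hH
    · obtain ⟨α, hα, hH⟩ := (holder_left_iff x₀ hx₀).2 ⟨P, hP, hslope⟩
      exact (h x₀ hx₀ α hα).2 hx₀' hH
  · intro h x₀ hx₀ α hα
    refine ⟨fun hx₁ hH => ?_, fun hx₀' hH => ?_⟩
    · obtain ⟨P, hP, hslope⟩ := (holder_right_iff x₀ hx₀).1 ⟨α, hα, hH⟩
      exact h P hP x₀ hx₀ (Or.inl ⟨hx₁, hslope⟩)
    · obtain ⟨P, hP, hslope⟩ := (holder_left_iff x₀ hx₀).1 ⟨α, hα, hH⟩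
      exact h P hP x₀ hx₀ (Or.inr ⟨hx₀', hslope⟩)
end

section
/- The set of continuous functions f : [0,1] → ℝ that are NOT completely non-Hölder is meagre in C([0,1]) with the supremum metric. -/
open Filter Set Topology MeasureTheory ProbabilityTheory

/-- Extend a continuous function on `[0,1]` to `ℝ` via the projection onto `[0,1]`. -/
noncomputable def extIcc (f : C(↥(Set.Icc (0 : ℝ) 1), ℝ)) : ℝ → ℝ :=
  fun x => f (Set.projIcc 0 1 zero_le_one x)

/-! Call `f` *`(σ, α, C, δ)`-Hölder* if at some `x₀ ∈ [0,1]` it satisfies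
`|f (x₀ + σ t) - f x₀| ≤ C t ^ α` for all `0 < t < δ`, with `σ = ±1` the side. A function that
is not completely non-Hölder is `(σ, 1/(k+1), C, 1/(n+1))`-Hölder for some naturals `k, C, n`,
so it suffices that each of these countably many sets is nowhere dense. It is closed by
compactness of `[0,1]`. It has empty interior: adding to `f` the sawtooth `(ε/2)|sin (2π m x)|`
with `m` large produces, within `1/m` of every point on either side, a zero and a peak of the
sawtooth, where the perturbed function differs by almost `ε/2`; a Hölder bound at scale `1/m`
forbids that. -/

open Real

lemma exists_nat_forall_Ioo_of_eventually_nhdsGT {P : ℝ → Prop} (h : ∀ᶠ t in 𝓝[>] 0, P t) :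
    ∃ n : ℕ, ∀ t ∈ Ioo (0 : ℝ) (1 / (n + 1)), P t := by
  obtain ⟨r, hr, hP⟩ := (nhdsGT_basis (0 : ℝ)).eventually_iff.1 h
  obtain ⟨n, hn⟩ := exists_nat_one_div_lt hr
  exact ⟨n, fun t ht => hP ⟨ht.1, ht.2.trans hn⟩⟩

lemma exists_abs_sin_eq_zero_and_one {σ : ℝ} (hσ : |σ| = 1) {m : ℕ} (hm : 0 < m) (x : ℝ) :
    ∃ t₁ ∈ Ioo (0 : ℝ) (1 / m), ∃ t₂ ∈ Ioo (0 : ℝ) (1 / m),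
      |sin (2 * π * m * (x + σ * t₁))| = 0 ∧ |sin (2 * π * m * (x + σ * t₂))| = 1 := by
  have hm' : (0 : ℝ) < m := Nat.cast_pos.2 hm
  have hσσ : σ * σ = 1 := by rw [← abs_mul_abs_self, hσ, one_mul]
  have habs_sin : ∀ θ, |sin (σ * θ)| = |sin θ| := by
    rcases abs_eq zero_le_one |>.1 hσ with rfl | rfl <;> simp [sin_neg]
  -- the first zero of `|sin (2π m ·)|` beyond `x` in direction `σ` is `σ j / (2m)`
  set u := σ * (2 * m) * x
  set j : ℤ := ⌊u⌋ + 1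
  have hj_cast : (j : ℝ) = ⌊u⌋ + 1 := by push_cast [j]; rfl
  have hj : 0 < j - u ∧ j - u ≤ 1 :=
    ⟨by linarith [Int.lt_floor_add_one u], by linarith [Int.floor_le u]⟩
  set t₁ := (j - u) / (2 * m)
  have h2m : 2 * m * t₁ = j - u := mul_div_cancel₀ _ (by positivity)
  have h4m : 2 * m * (1 / (4 * m)) = (1 / 2 : ℝ) := by field_simp; norm_num
  have ht₁ : 2 * π * m * (x + σ * t₁) = σ * (j * π) := by
    linear_combination π * σ * h2m - 2 * π * m * x * hσσ
  have ht₂ : 2 * π * m * (x + σ * (t₁ + 1 / (4 * m))) = σ * (π / 2 + j * π) := by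
    linear_combination π * σ * h2m + π * σ * h4m - 2 * π * m * x * hσσ
  have ht₁_pos : 0 < t₁ := div_pos hj.1 (by positivity)
  have ht₁_le : t₁ ≤ 1 / (2 * m) := div_le_div_of_nonneg_right hj.2 (by positivity)
  have hlt : 1 / (2 * m) + 1 / (4 * m) < (1 / m : ℝ) := by
    field_simp; norm_num
  refine ⟨t₁, ⟨ht₁_pos, ?_⟩, t₁ + 1 / (4 * m), ⟨by positivity, by linarith⟩, ?_, ?_⟩
  · linarith [(by positivity : (0 : ℝ) < 1 / (4 * m))]
  · rw [ht₁, habs_sin, sin_int_mul_pi, abs_zero]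
  · rw [ht₂, habs_sin, sin_add_int_mul_pi, abs_mul, abs_neg_one_zpow, sin_pi_div_two, abs_one,
      one_mul]

lemma extIcc_of_mem (f : C(Icc (0 : ℝ) 1, ℝ)) {y : ℝ} (hy : y ∈ Icc (0 : ℝ) 1) :
    extIcc f y = f ⟨y, hy⟩ := by
  rw [extIcc, projIcc_of_mem]

lemma uniformContinuous_extIcc (f : C(Icc (0 : ℝ) 1, ℝ)) : UniformContinuous (extIcc f) :=
  (CompactSpace.uniformContinuous_of_continuous f.continuous).comp
    (LipschitzWith.projIcc zero_le_one).uniformContinuous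

-- The side condition `x₀ + σ t ∈ [0,1]` matters: `extIcc f` is constant outside `[0,1]`.
def holderSet (σ α C δ : ℝ) : Set C(Icc (0 : ℝ) 1, ℝ) :=
  {f | ∃ x₀ : Icc (0 : ℝ) 1, ∀ t ∈ Ioo 0 δ, (x₀ : ℝ) + σ * t ∈ Icc 0 1 ∧
    |extIcc f (x₀ + σ * t) - extIcc f x₀| ≤ C * t ^ α}

lemma isClosed_holderSet (σ α C δ : ℝ) : IsClosed (holderSet σ α C δ) := by
  have hS : holderSet σ α C δ = Prod.snd '' {p : Icc (0 : ℝ) 1 × C(Icc (0 : ℝ) 1, ℝ) |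
      ∀ t ∈ Ioo 0 δ, (p.1 : ℝ) + σ * t ∈ Icc 0 1 ∧
        |extIcc p.2 (p.1 + σ * t) - extIcc p.2 p.1| ≤ C * t ^ α} := by
    ext f; simp [holderSet]
  rw [hS]
  refine isClosedMap_snd_of_compactSpace _ ?_
  simp only [ofPred_forall]
  refine isClosed_iInter fun t => isClosed_iInter fun _ => IsClosed.inter ?_ ?_
  · exact isClosed_Icc.preimage (by fun_prop)
  · have hcont : Continuous fun p : Icc (0 : ℝ) 1 × C(Icc (0 : ℝ) 1, ℝ) =>
        |extIcc p.2 (p.1 + σ * t) - extIcc p.2 p.1| := by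
      unfold extIcc
      fun_prop
    exact isClosed_le hcont continuous_const

lemma interior_holderSet_eq_empty {σ α δ : ℝ} (hσ : |σ| = 1) (hα : 0 < α) (hδ : 0 < δ) (C : ℝ) :
    interior (holderSet σ α C δ) = ∅ := by
  refine eq_empty_iff_forall_notMem.2 fun f hf => ?_
  obtain ⟨ε, hε, hball⟩ := Metric.mem_nhds_iff.1 (mem_interior_iff_mem_nhds.1 hf)
  obtain ⟨η, hη, hf_uc⟩ :=
    Metric.uniformContinuous_iff.1 (uniformContinuous_extIcc f) (ε / 4) (by positivity)
  have hsmall : ∀ᶠ t in 𝓝[>] 0, t < δ ∧ t < η ∧ C * t ^ α < ε / 8 := by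
    have hlim : Tendsto (fun t : ℝ => C * t ^ α) (𝓝[>] 0) (𝓝 0) := by
      have := ((continuousAt_rpow_const 0 α (Or.inr hα.le)).tendsto.const_mul C)
      rw [zero_rpow hα.ne', mul_zero] at this
      exact this.mono_left nhdsWithin_le_nhds
    filter_upwards [Ioo_mem_nhdsGT hδ, Ioo_mem_nhdsGT hη,
      hlim.eventually (gt_mem_nhds (show (0 : ℝ) < ε / 8 by positivity))] with t htδ htη htC
    exact ⟨htδ.2, htη.2, htC⟩
  obtain ⟨n, hn⟩ := exists_nat_forall_Ioo_of_eventually_nhdsGT hsmall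
  set m := n + 1
  let w : C(Icc (0 : ℝ) 1, ℝ) := ⟨fun y => |sin (2 * π * m * y)|, by fun_prop⟩
  have hw : ‖w‖ ≤ 1 := (ContinuousMap.norm_le _ zero_le_one).2 fun y => by
    simpa [w] using abs_sin_le_one _
  obtain ⟨x₀, hx₀⟩ : f + (ε / 2) • w ∈ holderSet σ α C δ := hball <| by
    rw [Metric.mem_ball, dist_self_add_left, norm_smul, Real.norm_of_nonneg (by positivity)]
    nlinarith
  obtain ⟨t₁, ht₁, t₂, ht₂, hw₁, hw₂⟩ := exists_abs_sin_eq_zero_and_one hσ n.succ_pos x₀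
  have hg : ∀ y (hy : y ∈ Icc (0 : ℝ) 1),
      extIcc (f + (ε / 2) • w) y = extIcc f y + ε / 2 * |sin (2 * π * m * y)| := by
    intro y hy
    simp [extIcc_of_mem _ hy, w]
  obtain ⟨hδ₁, hη₁, hC₁⟩ := hn t₁ (by simpa [m] using ht₁)
  obtain ⟨hδ₂, hη₂, hC₂⟩ := hn t₂ (by simpa [m] using ht₂)
  obtain ⟨hy₁, hb₁⟩ := hx₀ t₁ ⟨ht₁.1, hδ₁⟩
  obtain ⟨hy₂, hb₂⟩ := hx₀ t₂ ⟨ht₂.1, hδ₂⟩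
  have hf₁₂ : dist (extIcc f (x₀ + σ * t₂)) (extIcc f (x₀ + σ * t₁)) < ε / 4 := by
    refine hf_uc ?_
    rw [Real.dist_eq, show x₀ + σ * t₂ - (x₀ + σ * t₁) = σ * (t₂ - t₁) by ring, abs_mul, hσ,
      one_mul, abs_sub_lt_iff]
    constructor <;> linarith [ht₁.1, ht₂.1]
  rw [hg _ hy₁, hw₁] at hb₁
  rw [hg _ hy₂, hw₂] at hb₂
  rw [Real.dist_eq] at hf₁₂
  linarith [abs_le.1 hb₁, abs_le.1 hb₂, abs_lt.1 hf₁₂]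

lemma isNowhereDense_holderSet {σ α δ : ℝ} (hσ : |σ| = 1) (hα : 0 < α) (hδ : 0 < δ) (C : ℝ) :
    IsNowhereDense (holderSet σ α C δ) :=
  (isClosed_holderSet σ α C δ).isNowhereDense_iff.2 (interior_holderSet_eq_empty hσ hα hδ C)

lemma HolderRightAt.eventually_nhdsGT {F : ℝ → ℝ} {α x₀ : ℝ} (h : HolderRightAt F α x₀)
    (hx₀ : x₀ ∈ Ico (0 : ℝ) 1) :
    ∃ C, ∀ᶠ t in 𝓝[>] 0, x₀ + t ∈ Icc 0 1 ∧ |F (x₀ + t) - F x₀| ≤ C * t ^ α := by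
  obtain ⟨C, hC⟩ := h
  have hmap : Tendsto (fun t => x₀ + t) (𝓝[>] 0) (𝓝[Ioc x₀ 1] x₀) := by
    refine tendsto_nhdsWithin_iff.2 ⟨?_, ?_⟩
    · exact ((continuous_const_add x₀).tendsto' 0 x₀ (add_zero x₀)).mono_left nhdsWithin_le_nhds
    · filter_upwards [Ioo_mem_nhdsGT (sub_pos.2 hx₀.2)] with t ht
      exact ⟨by linarith [ht.1], by linarith [ht.2]⟩
  refine ⟨C, ?_⟩
  filter_upwards [hmap.eventually hC, hmap.eventually self_mem_nhdsWithin, self_mem_nhdsWithin]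
    with t hCt hmem (ht : 0 < t)
  rw [add_sub_cancel_left, abs_of_pos ht, div_le_iff₀ (rpow_pos_of_pos ht α)] at hCt
  exact ⟨⟨hx₀.1.trans hmem.1.le, hmem.2⟩, hCt⟩

lemma HolderLeftAt.eventually_nhdsGT {F : ℝ → ℝ} {α x₀ : ℝ} (h : HolderLeftAt F α x₀)
    (hx₀ : x₀ ∈ Ioc (0 : ℝ) 1) :
    ∃ C, ∀ᶠ t in 𝓝[>] 0, x₀ - t ∈ Icc 0 1 ∧ |F (x₀ - t) - F x₀| ≤ C * t ^ α := by
  obtain ⟨C, hC⟩ := h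
  have hmap : Tendsto (fun t => x₀ - t) (𝓝[>] 0) (𝓝[Ico 0 x₀] x₀) := by
    refine tendsto_nhdsWithin_iff.2 ⟨?_, ?_⟩
    · exact ((continuous_sub_left x₀).tendsto' 0 x₀ (sub_zero x₀)).mono_left nhdsWithin_le_nhds
    · filter_upwards [Ioo_mem_nhdsGT hx₀.1] with t ht
      exact ⟨by linarith [ht.2], by linarith [ht.1]⟩
  refine ⟨C, ?_⟩
  filter_upwards [hmap.eventually hC, hmap.eventually self_mem_nhdsWithin, self_mem_nhdsWithin]
    with t hCt hmem (ht : 0 < t)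
  rw [sub_sub_cancel_left, abs_neg, abs_of_pos ht, div_le_iff₀ (rpow_pos_of_pos ht α)] at hCt
  exact ⟨⟨hmem.1, hmem.2.le.trans hx₀.2⟩, hCt⟩

lemma exists_mem_holderSet_of_eventually {f : C(Icc (0 : ℝ) 1, ℝ)} {σ α C : ℝ}
    (x₀ : Icc (0 : ℝ) 1) (hα : 0 < α) (h : ∀ᶠ t in 𝓝[>] 0, (x₀ : ℝ) + σ * t ∈ Icc 0 1 ∧
      |extIcc f (x₀ + σ * t) - extIcc f x₀| ≤ C * t ^ α) :
    ∃ k C' n : ℕ, f ∈ holderSet σ (1 / (k + 1)) C' (1 / (n + 1)) := by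
  obtain ⟨k, hk⟩ := exists_nat_one_div_lt hα
  have h' : ∀ᶠ t in 𝓝[>] 0, (x₀ : ℝ) + σ * t ∈ Icc 0 1 ∧
      |extIcc f (x₀ + σ * t) - extIcc f x₀| ≤ ⌈C⌉₊ * t ^ (1 / ((k : ℝ) + 1)) := by
    filter_upwards [h, Ioo_mem_nhdsGT one_pos] with t ⟨hmem, hb⟩ ht
    refine ⟨hmem, hb.trans ?_⟩
    calc C * t ^ α ≤ ⌈C⌉₊ * t ^ α :=
          mul_le_mul_of_nonneg_right (Nat.le_ceil C) (rpow_nonneg ht.1.le α)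
      _ ≤ ⌈C⌉₊ * t ^ (1 / ((k : ℝ) + 1)) := mul_le_mul_of_nonneg_left
        (rpow_le_rpow_of_exponent_ge ht.1 ht.2.le hk.le) (Nat.cast_nonneg _)
  obtain ⟨n, hn⟩ := exists_nat_forall_Ioo_of_eventually_nhdsGT h'
  exact ⟨k, ⌈C⌉₊, n, x₀, hn⟩

lemma exists_mem_holderSet_of_not_completelyNonHolder {f : C(Icc (0 : ℝ) 1, ℝ)}
    (hf : ¬ CompletelyNonHolder (extIcc f)) :
    ∃ σ ∈ ({1, -1} : Set ℝ), ∃ k C n : ℕ, f ∈ holderSet σ (1 / (k + 1)) C (1 / (n + 1)) := by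
  simp only [CompletelyNonHolder, not_forall, not_and_or, not_not] at hf
  obtain ⟨x₀, hx₀, α, hα, ⟨hx₀₁, hR⟩ | ⟨hx₀₀, hL⟩⟩ := hf
  · obtain ⟨C, hC⟩ := hR.eventually_nhdsGT ⟨hx₀.1, hx₀₁⟩
    exact ⟨1, by simp, exists_mem_holderSet_of_eventually ⟨x₀, hx₀⟩ hα.1 (by simpa using hC)⟩
  · obtain ⟨C, hC⟩ := hL.eventually_nhdsGT ⟨hx₀₀, hx₀.2⟩
    exact ⟨-1, by simp, exists_mem_holderSet_of_eventually ⟨x₀, hx₀⟩ hα.1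
      (by simpa [← sub_eq_add_neg] using hC)⟩

/-- the set of continuous functions on `[0,1]` which are not completely
non-Hölder is meagre in `C([0,1])` (with the uniform topology). -/
theorem stmt4 :
    IsMeagre {f : C(↥(Set.Icc (0 : ℝ) 1), ℝ) | ¬ CompletelyNonHolder (extIcc f)} := by
  have hcover : {f : C(↥(Set.Icc (0 : ℝ) 1), ℝ) | ¬ CompletelyNonHolder (extIcc f)} ⊆
      ⋃ σ ∈ ({1, -1} : Set ℝ), ⋃ (k : ℕ) (C : ℕ) (n : ℕ),
        holderSet σ (1 / (k + 1)) C (1 / (n + 1)) := fun f hf => by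
    simpa only [mem_iUnion, exists_prop] using exists_mem_holderSet_of_not_completelyNonHolder hf
  refine IsMeagre.mono hcover (isMeagre_biUnion (toFinite _).countable fun σ hσ => ?_)
  have hσ : |σ| = 1 := by rcases hσ with rfl | rfl <;> simp
  exact isMeagre_iUnion fun k => isMeagre_iUnion fun C => isMeagre_iUnion fun n =>
    (isNowhereDense_holderSet hσ (by positivity) (by positivity) C).isMeagre
end

section
/- Let 𝒜 ⊆ C([0,1]) be a closed subalgebra (closed under uniform convergence) containing a non-constant function, and let x₀ ∈ (0,1). Then 𝒜 contains a non-constant function f that is differentiable at x₀. -/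
open Filter Set Topology MeasureTheory ProbabilityTheory

/-!
Pick a non-constant `f ∈ 𝒜` and a point `b` with `f b ≠ f x₀`. The continuous function
`H t = max (|t - f x₀| - δ) 0`, with `δ = |f b - f x₀| / 2`, vanishes near `f x₀` but not at
`f b`. By Weierstrass approximation `H ∘ f` lies in the closed subalgebra `𝒜`; it is
non-constant, and it vanishes on a neighbourhood of `x₀`, so it is differentiable there.
-/

theorem Subalgebra.comp_mem_of_isClosed {X : Type*} [TopologicalSpace X] [CompactSpace X]
    {A : Subalgebra ℝ C(X, ℝ)} (hA : IsClosed (A : Set C(X, ℝ))) {f : C(X, ℝ)} (hf : f ∈ A)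
    (H : C(ℝ, ℝ)) : H.comp f ∈ A :=
  Subalgebra.topologicalClosure_minimal le_rfl hA
    (ContinuousMap.comp_attachBound_mem_closure A ⟨f, hf⟩ (H.restrict _))

theorem differentiableAt_comp_of_eventuallyEq_const {𝕜 E F G : Type*}
    [NontriviallyNormedField 𝕜] [NormedAddCommGroup E] [NormedSpace 𝕜 E] [TopologicalSpace F]
    [NormedAddCommGroup G] [NormedSpace 𝕜 G] {g : E → F} {H : F → G} {x : E} {c : G}
    (hg : ContinuousAt g x) (hH : H =ᶠ[𝓝 (g x)] fun _ => c) : DifferentiableAt 𝕜 (H ∘ g) x :=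
  (differentiableAt_const c).congr_of_eventuallyEq (hH.comp_tendsto hg)

theorem eventuallyEq_max_abs_sub_sub_zero {c δ : ℝ} (hδ : 0 < δ) :
    (fun t => max (|t - c| - δ) 0) =ᶠ[𝓝 c] fun _ => 0 := by
  filter_upwards [Metric.ball_mem_nhds c hδ] with t ht
  rw [Metric.mem_ball, Real.dist_eq] at ht
  exact max_eq_right (by linarith)

theorem continuous_extIcc (f : C(↥(Set.Icc (0 : ℝ) 1), ℝ)) : Continuous (extIcc f) :=
  f.continuous.comp continuous_projIcc

theorem extIcc_comp (H : C(ℝ, ℝ)) (f : C(↥(Set.Icc (0 : ℝ) 1), ℝ)) :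
    extIcc (H.comp f) = H ∘ extIcc f :=
  rfl

theorem stmt6_general (𝒜 : Subalgebra ℝ C(↥(Set.Icc (0 : ℝ) 1), ℝ))
    (hclosed : IsClosed (𝒜 : Set C(↥(Set.Icc (0 : ℝ) 1), ℝ)))
    (hnc : ∃ f ∈ 𝒜, ¬ ∃ c : ℝ, ∀ x, f x = c)
    (x₀ : ℝ) :
    ∃ f ∈ 𝒜, (¬ ∃ c : ℝ, ∀ x, f x = c) ∧ DifferentiableAt ℝ (extIcc f) x₀ := by
  obtain ⟨f, hf, hfnc⟩ := hnc
  set p₀ := Set.projIcc 0 1 zero_le_one x₀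
  set c := f p₀
  obtain ⟨b, hb⟩ : ∃ b, f b ≠ c := by push Not at hfnc; exact hfnc c
  set δ := |f b - c| / 2 with hδ_def
  have hδ : 0 < δ := half_pos (abs_pos.mpr (sub_ne_zero.mpr hb))
  let H : C(ℝ, ℝ) := ⟨fun t => max (|t - c| - δ) 0, by fun_prop⟩
  refine ⟨H.comp f, Subalgebra.comp_mem_of_isClosed hclosed hf H, ?_, ?_⟩
  · rintro ⟨k, hk⟩
    have hHb : H (f b) = δ := by
      have hsub : |f b - c| - δ = δ := by rw [hδ_def]; ring
      change max (|f b - c| - δ) 0 = δ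
      rw [hsub, max_eq_left hδ.le]
    have hHc : H c = 0 := by simp [H, hδ.le]
    have hHbc : H (f b) = H c := (hk b).trans (hk p₀).symm
    rw [hHb, hHc] at hHbc
    exact hδ.ne' hHbc
  · rw [extIcc_comp]
    exact differentiableAt_comp_of_eventuallyEq_const (continuous_extIcc f).continuousAt
      (eventuallyEq_max_abs_sub_sub_zero hδ)

/-- a closed subalgebra of `C([0,1])` containing a non-constant function
contains, for any `x₀ ∈ (0,1)`, a non-constant function differentiable at `x₀`. -/
theorem stmt6 (𝒜 : Subalgebra ℝ C(↥(Set.Icc (0 : ℝ) 1), ℝ))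
    (hclosed : IsClosed (𝒜 : Set C(↥(Set.Icc (0 : ℝ) 1), ℝ)))
    (hnc : ∃ f ∈ 𝒜, ¬ ∃ c : ℝ, ∀ x, f x = c)
    (x₀ : ℝ) (hx₀ : x₀ ∈ Set.Ioo (0 : ℝ) 1) :
    ∃ f ∈ 𝒜, (¬ ∃ c : ℝ, ∀ x, f x = c) ∧ DifferentiableAt ℝ (extIcc f) x₀ :=
  stmt6_general 𝒜 hclosed hnc x₀
end

section
/- Let f : [0,1] → ℝ be continuous, non-constant, with f(x₀) = 0 for some x₀ ∈ (0,1). Define ω(t) = max{|f(x)| : |x - x₀| ≤ t, x ∈ [0,1]} + t for t ≥ 0. Then ω is continuous, strictly increasing, ω(0) = 0, and the function g(x) = (ω⁻¹(|f(x)|))² satisfies |g(x)| ≤ |x - x₀|² near x₀ and is differentiable at x₀ with derivative 0. -/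
open Filter Set Topology MeasureTheory ProbabilityTheory

/-!
`ω` is the identity plus the maximum `t ↦ max |f|` over the window `[x₀ - t, x₀ + t] ∩ [0, 1]`,
which is monotone and continuous (the window is the image of the fixed compact `[-1, 1]` under a
map continuous in `t`); hence `ω` is continuous and strictly increasing. Since
`|f x| ≤ ω |x - x₀|`, the intermediate value theorem gives `0 ≤ ω⁻¹ |f x| ≤ |x - x₀|`, so
`g = O((x - x₀)²)` at `x₀`, which forces `g' x₀ = 0`.
-/

open Asymptotics Metric

noncomputable def windowSup (g : ℝ → ℝ) (a b x₀ t : ℝ) : ℝ :=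
  sSup (g '' (Icc a b ∩ Icc (x₀ - t) (x₀ + t)))

section windowSup

variable {g : ℝ → ℝ} {a b x₀ : ℝ}

lemma bddAbove_image_window (hg : ContinuousOn g (Icc a b)) (t : ℝ) :
    BddAbove (g '' (Icc a b ∩ Icc (x₀ - t) (x₀ + t))) :=
  (isCompact_Icc.inter_right isClosed_Icc).bddAbove_image (hg.mono inter_subset_left)

lemma le_windowSup (hg : ContinuousOn g (Icc a b)) {x t : ℝ} (hx : x ∈ Icc a b)
    (hxt : |x - x₀| ≤ t) : g x ≤ windowSup g a b x₀ t :=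
  le_csSup (bddAbove_image_window hg t)
    ⟨x, ⟨hx, mem_Icc_iff_abs_le.mp (abs_sub_comm x x₀ ▸ hxt)⟩, rfl⟩

lemma windowSup_zero (hx₀ : x₀ ∈ Icc a b) : windowSup g a b x₀ 0 = g x₀ := by
  simp [windowSup, inter_eq_right.mpr (singleton_subset_iff.mpr hx₀)]

lemma monotoneOn_windowSup (hg : ContinuousOn g (Icc a b)) (hx₀ : x₀ ∈ Icc a b) :
    MonotoneOn (windowSup g a b x₀) (Ici 0) := fun s hs t _ hst =>
  csSup_le_csSup (bddAbove_image_window hg t)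
    ⟨g x₀, x₀, ⟨hx₀, by simp only [mem_Icc]; constructor <;> linarith [mem_Ici.mp hs]⟩, rfl⟩
    (image_mono (inter_subset_inter_right _ (Icc_subset_Icc (by linarith) (by linarith))))

lemma window_eq_image_projIcc (hx₀ : x₀ ∈ Icc a b) {t : ℝ} (ht : 0 ≤ t) :
    Icc a b ∩ Icc (x₀ - t) (x₀ + t) =
      (fun u => (projIcc a b (hx₀.1.trans hx₀.2) (x₀ + t * u) : ℝ)) '' Icc (-1) 1 := by
  ext x
  constructor
  · rintro ⟨hx, hxt⟩
    rcases ht.eq_or_lt with rfl | ht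
    · refine ⟨0, by norm_num, ?_⟩
      have : x = x₀ := by simpa using hxt
      simp [this, projIcc_of_mem _ hx₀]
    · refine ⟨(x - x₀) / t, ?_, ?_⟩
      · rw [mem_Icc, le_div_iff₀ ht, div_le_iff₀ ht]
        constructor <;> linarith [hxt.1, hxt.2]
      · simp [mul_div_cancel₀ _ ht.ne', projIcc_of_mem _ hx]
  · rintro ⟨u, hu, rfl⟩
    refine ⟨Subtype.prop _, mem_Icc_iff_abs_le.mp ?_⟩
    calc |x₀ - projIcc a b _ (x₀ + t * u)|
        = |(projIcc a b (hx₀.1.trans hx₀.2) x₀ : ℝ) - projIcc a b _ (x₀ + t * u)| := by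
          rw [projIcc_of_mem _ hx₀]
      _ ≤ |x₀ - (x₀ + t * u)| := abs_projIcc_sub_projIcc _
      _ ≤ t := by
          rw [sub_add_cancel_left, abs_neg, abs_mul, abs_of_nonneg ht]
          exact mul_le_of_le_one_right ht (abs_le.mpr hu)

lemma continuousOn_windowSup (hg : ContinuousOn g (Icc a b)) (hx₀ : x₀ ∈ Icc a b) :
    ContinuousOn (windowSup g a b x₀) (Ici 0) := by
  have hcont : Continuous fun t =>
      sSup ((fun u => g (projIcc a b (hx₀.1.trans hx₀.2) (x₀ + t * u))) '' Icc (-1) 1) :=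
    isCompact_Icc.continuous_sSup
      (hg.comp_continuous (continuous_subtype_val.comp (continuous_projIcc.comp (by fun_prop)))
        fun _ => Subtype.prop _)
  refine hcont.continuousOn.congr fun t ht => ?_
  rw [windowSup, window_eq_image_projIcc hx₀ ht, image_image]

end windowSup

lemma Set.LeftInvOn.mapsTo_Icc {ω inv : ℝ → ℝ} {r : ℝ} (hr : 0 ≤ r)
    (hω : ContinuousOn ω (Icc 0 r)) (hinv : LeftInvOn inv ω (Icc 0 r)) :
    MapsTo inv (Icc (ω 0) (ω r)) (Icc 0 r) := by
  intro y hy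
  obtain ⟨t, ht, rfl⟩ := intermediate_value_Icc hr hω hy
  rwa [hinv ht]

lemma hasDerivAt_zero_of_norm_le_sq {𝕜 F : Type*} [NontriviallyNormedField 𝕜]
    [NormedAddCommGroup F] [NormedSpace 𝕜 F] {g : 𝕜 → F} {x₀ : 𝕜}
    (h : ∀ᶠ x in 𝓝 x₀, ‖g x‖ ≤ ‖x - x₀‖ ^ 2) : HasDerivAt g 0 x₀ := by
  have hg₀ : g x₀ = 0 := norm_le_zero_iff.mp (by simpa using h.self_of_nhds)
  rw [hasDerivAt_iff_isLittleO]
  simp only [hg₀, smul_zero, sub_zero]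
  refine (IsBigO.of_bound 1 (h.mono fun x hx => ?_)).trans_isLittleO
    (isLittleO_pow_sub_sub x₀ one_lt_two)
  rwa [one_mul, norm_pow, norm_norm]

theorem stmt8_general (f : ℝ → ℝ) (hf : ContinuousOn f (Set.Icc 0 1))
    (x₀ : ℝ) (hx₀ : x₀ ∈ Set.Ioo (0 : ℝ) 1) (hfx₀ : f x₀ = 0)
    (ω : ℝ → ℝ)
    (hω : ∀ t, ω t = sSup ((fun x => |f x|) '' (Set.Icc 0 1 ∩ Set.Icc (x₀ - t) (x₀ + t))) + t) :
    ContinuousOn ω (Set.Ici 0) ∧ StrictMonoOn ω (Set.Ici 0) ∧ ω 0 = 0 ∧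
      ∀ invω : ℝ → ℝ, (∀ t ∈ Set.Icc (0 : ℝ) 1, invω (ω t) = t) →
        (∀ᶠ x in nhds x₀, |(invω |f x|) ^ 2| ≤ (x - x₀) ^ 2) ∧
        HasDerivAt (fun x => (invω |f x|) ^ 2) 0 x₀ := by
  have hx₀' : x₀ ∈ Icc 0 1 := Ioo_subset_Icc_self hx₀
  have hω' : ω = fun t => windowSup (|f ·|) 0 1 x₀ t + t := funext hω
  have hω₀ : ω 0 = 0 := by simp [hω', windowSup_zero hx₀', hfx₀]
  have hωc : ContinuousOn ω (Ici 0) :=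
    hω' ▸ (continuousOn_windowSup hf.abs hx₀').add continuousOn_id
  refine ⟨hωc, ?_, hω₀, fun invω hinv => ?_⟩
  · intro s hs t ht hst
    simp only [hω']
    linarith [monotoneOn_windowSup hf.abs hx₀' hs ht hst.le]
  have hbound : ∀ᶠ x in 𝓝 x₀, |(invω |f x|) ^ 2| ≤ (x - x₀) ^ 2 := by
    filter_upwards [isOpen_Ioo.mem_nhds hx₀, ball_mem_nhds x₀ one_pos] with x hx hxball
    have hr : |x - x₀| ≤ 1 := (Real.dist_eq x x₀ ▸ mem_ball.mp hxball).le
    have hfx : |f x| ∈ Icc (ω 0) (ω |x - x₀|) := by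
      rw [hω₀, hω']
      exact ⟨abs_nonneg _, le_add_of_le_of_nonneg
        (le_windowSup hf.abs (Ioo_subset_Icc_self hx) le_rfl) (abs_nonneg _)⟩
    obtain ⟨h0, hle⟩ := LeftInvOn.mapsTo_Icc (abs_nonneg _) (hωc.mono fun t ht => ht.1)
      (fun t ht => hinv t ⟨ht.1, ht.2.trans hr⟩) hfx
    rw [abs_of_nonneg (sq_nonneg _), ← sq_abs (x - x₀)]
    exact pow_le_pow_left₀ h0 hle 2
  refine ⟨hbound, hasDerivAt_zero_of_norm_le_sq (hbound.mono fun x hx => ?_)⟩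
  rwa [Real.norm_eq_abs, Real.norm_eq_abs, sq_abs]

/-- with `ω(t) = max{|f x| : x ∈ [0,1], |x - x₀| ≤ t} + t`, the function `ω` is
continuous and strictly increasing with `ω 0 = 0`, and for any left inverse `invω` of `ω` on
`[0,1]`, the function `g = (invω ∘ |f|)²` satisfies `|g x| ≤ (x - x₀)²` near `x₀` and is
differentiable at `x₀` with derivative `0`. -/
theorem stmt8 (f : ℝ → ℝ) (hf : ContinuousOn f (Set.Icc 0 1))
    (hnc : ¬ ∃ c : ℝ, ∀ x ∈ Set.Icc (0 : ℝ) 1, f x = c)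
    (x₀ : ℝ) (hx₀ : x₀ ∈ Set.Ioo (0 : ℝ) 1) (hfx₀ : f x₀ = 0)
    (ω : ℝ → ℝ)
    (hω : ∀ t, ω t = sSup ((fun x => |f x|) '' (Set.Icc 0 1 ∩ Set.Icc (x₀ - t) (x₀ + t))) + t) :
    ContinuousOn ω (Set.Ici 0) ∧ StrictMonoOn ω (Set.Ici 0) ∧ ω 0 = 0 ∧
      ∀ invω : ℝ → ℝ, (∀ t ∈ Set.Icc (0 : ℝ) 1, invω (ω t) = t) →
        (∀ᶠ x in nhds x₀, |(invω |f x|) ^ 2| ≤ (x - x₀) ^ 2) ∧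
        HasDerivAt (fun x => (invω |f x|) ^ 2) 0 x₀ :=
  stmt8_general f hf x₀ hx₀ hfx₀ ω hω
end

section
/- Let σ : ℝ → ℝ be the tent function with σ(x) = 2x on [0,1/2], σ(x) = 2−2x on [1/2,1], and σ(x) = 0 outside [0,1], and set σ_{n,i}(x) = σ(2ⁿx − i). Let f(x) = Σ_{n≥0} Σ_{i=0}^{2ⁿ−1} γ_{n,i} σ_{n,i}(x) be a uniformly convergent Faber–Schauder series, δ_n = min_{0≤i≤2ⁿ−1} |γ_{n,i}|, and suppose limsup_n 2^{αn} δ_n = ∞ for some α ∈ (0,1]. Then at no point x₀ ∈ [0,1] is f α-Hölder from the right or from the left. -/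
open Filter Set Topology MeasureTheory ProbabilityTheory

/-- Partial sums of a Faber–Schauder series with coefficients `γ`. -/
noncomputable def fsPartial (γ : ℕ → ℕ → ℝ) (N : ℕ) (x : ℝ) : ℝ :=
  ∑ n ∈ Finset.range N, ∑ i ∈ Finset.range (2 ^ n), γ n i * fs n i x

lemma range_pow_nonempty (n : ℕ) : (Finset.range (2 ^ n)).Nonempty :=
  Finset.nonempty_range_iff.mpr (by positivity)

/-- `δ_n = min_{0 ≤ i ≤ 2ⁿ-1} |γ_{n,i}|`. -/
noncomputable def deltaCoef (γ : ℕ → ℕ → ℝ) (n : ℕ) : ℝ :=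
  (Finset.range (2 ^ n)).inf' (range_pow_nonempty n) fun i => |γ n i|

/-- `Δ_n = max_{0 ≤ i ≤ 2ⁿ-1} |γ_{n,i}|`. -/
noncomputable def DeltaCoef (γ : ℕ → ℕ → ℝ) (n : ℕ) : ℝ :=
  (Finset.range (2 ^ n)).sup' (range_pow_nonempty n) fun i => |γ n i|

/-!
At a dyadic point of level `m` the series is the finite sum `fsPartial γ m`, and `σ_{n',j}` is
affine on every dyadic interval of level `n > n'`; hence `γ_{n,i}` is the second difference
`f(mid) - (f(left) + f(right))/2` of `f` over the `i`-th dyadic interval of level `n`. If `f`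
were `α`-Hölder with constant `M` on one side of `x₀`, then for every large `n` a dyadic
interval of level `n` on that side within distance `2 · 2⁻ⁿ` of `x₀` gives
`δ_n ≤ |γ_{n,i}| ≤ 2M (2 · 2⁻ⁿ)^α`, so `2^{αn} δ_n` would stay bounded.
-/

lemma tent_of_nonpos {x : ℝ} (hx : x ≤ 0) : tent x = 0 := by simp [tent, hx]

lemma tent_of_one_le {x : ℝ} (hx : 1 ≤ x) : tent x = 0 := by simp [tent, hx]

lemma tent_of_nonneg_of_le_half {x : ℝ} (h₀ : 0 ≤ x) (h : x ≤ 1 / 2) : tent x = 2 * x := by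
  rcases h₀.eq_or_lt with rfl | h₀
  · simp [tent]
  · rw [tent, if_neg (by push Not; constructor <;> linarith), if_pos h]

lemma tent_of_half_le_of_le_one {x : ℝ} (h : 1 / 2 ≤ x) (h₁ : x ≤ 1) :
    tent x = 2 - 2 * x := by
  rcases h₁.eq_or_lt with rfl | h₁
  · simp [tent]
  · rw [tent, if_neg (by push Not; constructor <;> linarith)]
    rcases h.eq_or_lt with rfl | h
    · norm_num
    · rw [if_neg (by linarith)]

lemma tent_intCast (J : ℤ) : tent J = 0 := by
  rcases le_or_gt J 0 with h | h
  · exact tent_of_nonpos (by exact_mod_cast h)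
  · exact tent_of_one_le (by exact_mod_cast h)

lemma tent_intCast_add_half (J : ℤ) : tent (J + 1 / 2) = if J = 0 then 1 else 0 := by
  rcases lt_trichotomy J 0 with h | rfl | h
  · have : (J : ℝ) ≤ -1 := by exact_mod_cast Int.le_sub_one_of_lt h
    rw [if_neg h.ne, tent_of_nonpos (by linarith)]
  · rw [if_pos rfl, tent_of_nonneg_of_le_half] <;> norm_num
  · have : (1 : ℝ) ≤ J := by exact_mod_cast h
    rw [if_neg h.ne', tent_of_one_le (by linarith)]

lemma midpoint_eq_of_eqOn_affine {g : ℝ → ℝ} {u v a b : ℝ} (huv : u ≤ v)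
    (hg : ∀ x ∈ Set.Icc u v, g x = a * x + b) : g ((u + v) / 2) = (g u + g v) / 2 := by
  rw [hg _ ⟨by linarith, by linarith⟩, hg u ⟨le_rfl, huv⟩, hg v ⟨huv, le_rfl⟩]
  ring

/-- The kinks `0, 1/2, 1` of the tent are dyadic of level `1`, so no dyadic interval of
level `≥ 1` straddles one of them. -/
lemma tent_affine_on_dyadic (J : ℤ) (k : ℕ) : ∃ a b : ℝ,
    ∀ x ∈ Set.Icc ((J : ℝ) / 2 ^ (k + 1)) ((J + 1) / 2 ^ (k + 1)), tent x = a * x + b := by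
  have hp : (0 : ℝ) < 2 ^ (k + 1) := by positivity
  have hp' : (2 : ℝ) ^ (k + 1) = 2 * 2 ^ k := pow_succ' 2 k
  rcases lt_or_ge J 0 with hJ | hJ
  · have : (J : ℝ) + 1 ≤ 0 := by exact_mod_cast hJ
    refine ⟨0, 0, fun x hx => ?_⟩
    rw [tent_of_nonpos (hx.2.trans (div_nonpos_of_nonpos_of_nonneg this hp.le))]
    ring
  rcases lt_or_ge J (2 ^ k) with hJk | hJk
  · have h₀ : (0 : ℝ) ≤ J := by exact_mod_cast hJ
    have h₁ : (J : ℝ) + 1 ≤ 2 ^ k := by exact_mod_cast hJk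
    refine ⟨2, 0, fun x hx => ?_⟩
    rw [tent_of_nonneg_of_le_half ((div_nonneg h₀ hp.le).trans hx.1)
      (hx.2.trans (by rw [div_le_iff₀ hp]; linarith))]
    ring
  rcases lt_or_ge J (2 ^ (k + 1)) with hJk' | hJk'
  · have h₀ : (2 : ℝ) ^ k ≤ J := by exact_mod_cast hJk
    have h₁ : (J : ℝ) + 1 ≤ 2 ^ (k + 1) := by exact_mod_cast hJk'
    have hhalf : (1 : ℝ) / 2 ≤ J / 2 ^ (k + 1) := by rw [le_div_iff₀ hp]; linarith
    refine ⟨-2, 2, fun x hx => ?_⟩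
    rw [tent_of_half_le_of_le_one (hhalf.trans hx.1)
      (hx.2.trans (by rw [div_le_one hp]; exact h₁))]
    ring
  · have h₀ : (2 : ℝ) ^ (k + 1) ≤ J := by exact_mod_cast hJk'
    refine ⟨0, 0, fun x hx => ?_⟩
    rw [tent_of_one_le (((one_le_div hp).mpr h₀).trans hx.1)]
    ring

lemma dyadic_midpoint_eq (x : ℝ) (n : ℕ) :
    (2 * x + 1) / 2 ^ (n + 1) = (x / 2 ^ n + (x + 1) / 2 ^ n) / 2 := by
  field_simp
  ring

lemma tent_midpoint_dyadic (J : ℤ) (k : ℕ) :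
    tent ((2 * J + 1) / 2 ^ (k + 2))
      = (tent (J / 2 ^ (k + 1)) + tent ((J + 1) / 2 ^ (k + 1))) / 2 := by
  obtain ⟨a, b, hab⟩ := tent_affine_on_dyadic J k
  rw [dyadic_midpoint_eq]
  refine midpoint_eq_of_eqOn_affine ?_ hab
  gcongr
  linarith

lemma fs_dyadic_eq_zero {n m : ℕ} (hm : m ≤ n) (i : ℕ) (k : ℤ) :
    fs n i (k / 2 ^ m) = 0 := by
  obtain ⟨d, rfl⟩ := Nat.exists_eq_add_of_le hm
  have h : (2 : ℝ) ^ (m + d) * (k / 2 ^ m) - i = ((k * 2 ^ d - i : ℤ) : ℝ) := by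
    push_cast
    field_simp
    ring
  rw [fs, h, tent_intCast]

lemma fs_midpoint_eq_ite (n i j : ℕ) :
    fs n j ((2 * i + 1) / 2 ^ (n + 1)) = if j = i then 1 else 0 := by
  have h : (2 : ℝ) ^ n * ((2 * i + 1) / 2 ^ (n + 1)) - j = ((i - j : ℤ) : ℝ) + 1 / 2 := by
    push_cast
    field_simp
    ring
  rw [fs, h, tent_intCast_add_half]
  simp only [sub_eq_zero, Nat.cast_inj, eq_comm]

lemma fs_midpoint_of_lt {n' n : ℕ} (hn : n' < n) (i j : ℕ) :
    fs n' j ((2 * i + 1) / 2 ^ (n + 1))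
      = (fs n' j (i / 2 ^ n) + fs n' j ((i + 1) / 2 ^ n)) / 2 := by
  obtain ⟨k, rfl⟩ := Nat.exists_eq_add_of_lt hn
  set J : ℤ := i - j * 2 ^ (k + 1)
  have hl : (2 : ℝ) ^ n' * (i / 2 ^ (n' + k + 1)) - j = J / 2 ^ (k + 1) := by
    simp only [J]; push_cast; field_simp; ring
  have hr : (2 : ℝ) ^ n' * ((i + 1) / 2 ^ (n' + k + 1)) - j = (J + 1) / 2 ^ (k + 1) := by
    simp only [J]; push_cast; field_simp; ring
  have hm : (2 : ℝ) ^ n' * ((2 * i + 1) / 2 ^ (n' + k + 1 + 1)) - j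
      = (2 * J + 1) / 2 ^ (k + 2) := by
    simp only [J]; push_cast; field_simp; ring
  rw [fs, fs, fs, hl, hr, hm, tent_midpoint_dyadic]

lemma fsPartial_dyadic_eq {m N : ℕ} (hN : m ≤ N) (γ : ℕ → ℕ → ℝ) (k : ℤ) :
    fsPartial γ N (k / 2 ^ m) = fsPartial γ m (k / 2 ^ m) := by
  induction N, hN using Nat.le_induction with
  | base => rfl
  | succ N hN ih =>
    rw [fsPartial, Finset.sum_range_succ, ← fsPartial, ih, add_eq_left]
    exact Finset.sum_eq_zero fun i _ => by rw [fs_dyadic_eq_zero hN, mul_zero]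

lemma apply_dyadic_eq_fsPartial {γ : ℕ → ℕ → ℝ} {f : ℝ → ℝ}
    (hf : ∀ x, Tendsto (fun N => fsPartial γ N x) atTop (𝓝 (f x))) (m : ℕ) (k : ℤ) :
    f (k / 2 ^ m) = fsPartial γ m (k / 2 ^ m) :=
  tendsto_nhds_unique (hf _) <| tendsto_const_nhds.congr' <|
    (eventually_ge_atTop m).mono fun _ hN => (fsPartial_dyadic_eq hN γ k).symm

lemma fsPartial_succ_midpoint (γ : ℕ → ℕ → ℝ) {n i : ℕ} (hi : i < 2 ^ n) :
    fsPartial γ (n + 1) ((2 * i + 1) / 2 ^ (n + 1))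
      = fsPartial γ n ((2 * i + 1) / 2 ^ (n + 1)) + γ n i := by
  simp only [fsPartial, Finset.sum_range_succ, fs_midpoint_eq_ite, mul_ite, mul_one, mul_zero,
    Finset.sum_ite_eq', Finset.mem_range, if_pos hi]

lemma two_mul_fsPartial_midpoint (γ : ℕ → ℕ → ℝ) (n i : ℕ) :
    2 * fsPartial γ n ((2 * i + 1) / 2 ^ (n + 1))
      = fsPartial γ n (i / 2 ^ n) + fsPartial γ n ((i + 1) / 2 ^ n) := by
  simp only [fsPartial, Finset.mul_sum, ← Finset.sum_add_distrib]
  refine Finset.sum_congr rfl fun n' hn' => Finset.sum_congr rfl fun j _ => ?_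
  rw [fs_midpoint_of_lt (Finset.mem_range.mp hn')]
  ring

lemma coef_eq_midpoint_sub {γ : ℕ → ℕ → ℝ} {f : ℝ → ℝ}
    (hf : ∀ x, Tendsto (fun N => fsPartial γ N x) atTop (𝓝 (f x))) {n i : ℕ}
    (hi : i < 2 ^ n) :
    γ n i = f ((2 * i + 1) / 2 ^ (n + 1)) - (f (i / 2 ^ n) + f ((i + 1) / 2 ^ n)) / 2 := by
  have hm := apply_dyadic_eq_fsPartial hf (n + 1) (2 * i + 1)
  have hl := apply_dyadic_eq_fsPartial hf n i
  have hr := apply_dyadic_eq_fsPartial hf n (i + 1)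
  push_cast at hm hl hr
  rw [hm, hl, hr, fsPartial_succ_midpoint γ hi, ← two_mul_fsPartial_midpoint]
  ring

lemma abs_coef_le_of_forall_Icc {γ : ℕ → ℕ → ℝ} {f : ℝ → ℝ}
    (hf : ∀ x, Tendsto (fun N => fsPartial γ N x) atTop (𝓝 (f x))) {n i : ℕ}
    (hi : i < 2 ^ n)
    {a B : ℝ} (hB : ∀ y ∈ Set.Icc ((i : ℝ) / 2 ^ n) ((i + 1) / 2 ^ n), |f y - a| ≤ B) :
    |γ n i| ≤ 2 * B := by
  have hlr : (i : ℝ) / 2 ^ n ≤ (i + 1) / 2 ^ n := by gcongr; linarith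
  have hl := hB _ ⟨le_rfl, hlr⟩
  have hr := hB _ ⟨hlr, le_rfl⟩
  have hm := hB ((i / 2 ^ n + (i + 1) / 2 ^ n) / 2) ⟨by linarith, by linarith⟩
  rw [coef_eq_midpoint_sub hf hi, dyadic_midpoint_eq]
  rw [abs_le] at hl hr hm ⊢
  constructor <;> linarith [hl.1, hl.2, hr.1, hr.2, hm.1, hm.2]

lemma abs_sub_le_max_mul_rpow_of_div_rpow_le {f : ℝ → ℝ} {α C x₀ y : ℝ}
    (h : |f y - f x₀| / |y - x₀| ^ α ≤ C) :
    |f y - f x₀| ≤ max C 0 * |y - x₀| ^ α := by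
  rcases eq_or_ne y x₀ with rfl | hy
  · simp only [sub_self, abs_zero]
    positivity
  · have hpos : 0 < |y - x₀| ^ α := Real.rpow_pos_of_pos (abs_pos.2 (sub_ne_zero.2 hy)) α
    rw [div_le_iff₀ hpos] at h
    exact h.trans (by gcongr; exact le_max_left _ _)

lemma two_rpow_mul_div_two_pow_rpow {c : ℝ} (hc : 0 ≤ c) (α : ℝ) (n : ℕ) :
    (2 : ℝ) ^ (α * n) * (c / 2 ^ n) ^ α = c ^ α := by
  rw [mul_comm α, Real.rpow_natCast_mul zero_le_two, ← Real.mul_rpow (by positivity)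
    (by positivity), mul_div_cancel₀ _ (by positivity)]

lemma tendsto_div_two_pow_atTop (c : ℝ) : Tendsto (fun n : ℕ => c / 2 ^ n) atTop (𝓝 0) :=
  tendsto_const_nhds.div_atTop (tendsto_pow_atTop_atTop_of_one_lt one_lt_two)

theorem not_exists_holder_bound_of_dyadic_approx {γ : ℕ → ℕ → ℝ} {f : ℝ → ℝ}
    (hf : ∀ x, Tendsto (fun N => fsPartial γ N x) atTop (𝓝 (f x))) {α : ℝ} (hα : 0 ≤ α)
    (hδ : ∀ C : ℝ, ∃ᶠ n : ℕ in atTop, C < (2 : ℝ) ^ (α * (n : ℝ)) * deltaCoef γ n)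
    {s : Set ℝ} {x₀ c : ℝ} (hc : 0 ≤ c)
    (happrox : ∀ᶠ n : ℕ in atTop, ∃ i : ℕ, i < 2 ^ n ∧
      Set.Icc ((i : ℝ) / 2 ^ n) ((i + 1) / 2 ^ n) ⊆ s ∩ Metric.closedBall x₀ (c / 2 ^ n)) :
    ¬ ∃ C : ℝ, ∀ᶠ y in 𝓝[s] x₀, |f y - f x₀| / |y - x₀| ^ α ≤ C := by
  rintro ⟨C, hC⟩
  set M := max C 0
  obtain ⟨ε, hε, hball⟩ := Metric.mem_nhdsWithin_iff.1 hC
  have hsmall := (tendsto_div_two_pow_atTop c).eventually (eventually_lt_nhds hε)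
  obtain ⟨n, hn, ⟨i, hi, hsub⟩, hnε⟩ := ((hδ (2 * M * c ^ α)).and_eventually
    (happrox.and hsmall)).exists
  have hγ : |γ n i| ≤ 2 * (M * (c / 2 ^ n) ^ α) := by
    refine abs_coef_le_of_forall_Icc (a := f x₀) hf hi fun y hy => ?_
    obtain ⟨hys, hyc⟩ := hsub hy
    rw [Metric.mem_closedBall, Real.dist_eq] at hyc
    calc |f y - f x₀| ≤ M * |y - x₀| ^ α :=
          abs_sub_le_max_mul_rpow_of_div_rpow_le (hball ⟨hyc.trans_lt hnε, hys⟩)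
      _ ≤ M * (c / 2 ^ n) ^ α := by gcongr
  have hbound : (2 : ℝ) ^ (α * n) * deltaCoef γ n ≤ 2 * M * c ^ α :=
    calc (2 : ℝ) ^ (α * n) * deltaCoef γ n ≤ 2 ^ (α * n) * |γ n i| := by
          gcongr; exact Finset.inf'_le _ (Finset.mem_range.2 hi)
      _ ≤ 2 ^ (α * n) * (2 * (M * (c / 2 ^ n) ^ α)) := by gcongr
      _ = 2 * M * c ^ α := by rw [← two_rpow_mul_div_two_pow_rpow hc α n]; ring
  exact hn.not_ge hbound

lemma eventually_dyadic_Icc_subset_right {x₀ : ℝ} (h₀ : 0 ≤ x₀) (h₁ : x₀ < 1) :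
    ∀ᶠ n : ℕ in atTop, ∃ i : ℕ, i < 2 ^ n ∧
      Set.Icc ((i : ℝ) / 2 ^ n) ((i + 1) / 2 ^ n)
        ⊆ Set.Ioc x₀ 1 ∩ Metric.closedBall x₀ (2 / 2 ^ n) := by
  filter_upwards [(tendsto_div_two_pow_atTop 2).eventually (eventually_lt_nhds (sub_pos.2 h₁))]
    with n hn
  have hp : (0 : ℝ) < 2 ^ n := by positivity
  rw [div_lt_iff₀ hp] at hn
  have hlo := Nat.lt_floor_add_one (2 ^ n * x₀)
  have hup := Nat.floor_le (mul_nonneg hp.le h₀)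
  refine ⟨⌊2 ^ n * x₀⌋₊ + 1, ?_, fun y ⟨hyl, hyr⟩ => ?_⟩
  · exact_mod_cast (show ((⌊2 ^ n * x₀⌋₊ + 1 : ℕ) : ℝ) < 2 ^ n by push_cast; nlinarith)
  rw [div_le_iff₀' hp] at hyl
  rw [le_div_iff₀' hp] at hyr
  push_cast at hyl hyr
  have hy : x₀ < y := lt_of_mul_lt_mul_left (hlo.trans_le hyl) hp.le
  refine ⟨⟨hy, ?_⟩, ?_⟩
  · nlinarith
  · rw [Metric.mem_closedBall, Real.dist_eq, abs_of_pos (sub_pos.2 hy), le_div_iff₀' hp]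
    linarith

lemma eventually_dyadic_Icc_subset_left {x₀ : ℝ} (h₀ : 0 < x₀) (h₁ : x₀ ≤ 1) :
    ∀ᶠ n : ℕ in atTop, ∃ i : ℕ, i < 2 ^ n ∧
      Set.Icc ((i : ℝ) / 2 ^ n) ((i + 1) / 2 ^ n)
        ⊆ Set.Ico 0 x₀ ∩ Metric.closedBall x₀ (2 / 2 ^ n) := by
  filter_upwards [(tendsto_div_two_pow_atTop 1).eventually (eventually_lt_nhds h₀)] with n hn
  have hp : (0 : ℝ) < 2 ^ n := by positivity
  rw [div_lt_iff₀ hp] at hn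
  obtain ⟨i, hi⟩ : ∃ i, ⌈2 ^ n * x₀⌉₊ = i + 2 :=
    Nat.exists_eq_add_of_le' (Nat.lt_ceil.2 (by push_cast; linarith))
  have hlo := Nat.le_ceil (2 ^ n * x₀)
  have hup := Nat.ceil_lt_add_one (mul_nonneg hp.le h₀.le)
  rw [hi] at hlo hup
  push_cast at hlo hup
  refine ⟨i, ?_, fun y ⟨hyl, hyr⟩ => ?_⟩
  · exact_mod_cast (show (i : ℝ) < 2 ^ n by nlinarith)
  rw [div_le_iff₀' hp] at hyl
  rw [le_div_iff₀' hp] at hyr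
  have hy : y < x₀ := lt_of_mul_lt_mul_left (by linarith) hp.le
  refine ⟨⟨?_, hy⟩, ?_⟩
  · exact nonneg_of_mul_nonneg_right ((Nat.cast_nonneg i).trans hyl) hp
  · rw [Metric.mem_closedBall, Real.dist_eq, abs_of_neg (sub_neg.2 hy), le_div_iff₀' hp]
    linarith

/-- if `f = Σ γ_{n,i} σ_{n,i}` converges uniformly and
`limsup 2^{αn} δ_n = ∞` for some `α ∈ (0,1]`, then `f` is at no point of `[0,1]`
`α`-Hölder from the right or from the left. -/
theorem stmt9 (γ : ℕ → ℕ → ℝ) (f : ℝ → ℝ)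
    (hconv : TendstoUniformly (fsPartial γ) f atTop)
    (α : ℝ) (hα : α ∈ Set.Ioc (0 : ℝ) 1)
    (hδ : ∀ C : ℝ, ∃ᶠ n : ℕ in atTop, C < (2 : ℝ) ^ (α * (n : ℝ)) * deltaCoef γ n) :
    ∀ x₀ ∈ Set.Icc (0 : ℝ) 1,
      (x₀ < 1 → ¬ HolderRightAt f α x₀) ∧ (0 < x₀ → ¬ HolderLeftAt f α x₀) := by
  intro x₀ ⟨h₀, h₁⟩
  have hf := hconv.tendsto_at
  exact ⟨fun h => not_exists_holder_bound_of_dyadic_approx hf hα.1.le hδ zero_le_two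
      (eventually_dyadic_Icc_subset_right h₀ h),
    fun h => not_exists_holder_bound_of_dyadic_approx hf hα.1.le hδ zero_le_two
      (eventually_dyadic_Icc_subset_left h h₁)⟩
end

section
/- The function f = Σ_{n≥0} (1/(n+1)²) Σ_{i=0}^{2ⁿ−1} σ_{n,i} is completely non-Hölder: for every x₀ ∈ [0,1] and every α ∈ (0,1], f is neither α-Hölder from the left nor from the right at x₀. -/
open Filter Set Topology MeasureTheory ProbabilityTheory

/-!
On a dyadic interval `[k/2ᵐ, (k+1)/2ᵐ]` every level `n < m` of the series is affine (the periodic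
tent `tent ∘ Int.fract` is affine on each `[j/2, (j+1)/2]`), while every level `n ≥ m` vanishes at
both endpoints and every level `n > m` also at the midpoint; level `m` is `1` there. Hence the
second difference `f(mid) - (f a + f b)/2` equals the coefficient `1/(m+1)²`. Each `x₀` has such
intervals on either side within distance `2/2ᵐ`, so a one-sided `α`-Hölder bound at `x₀` would
force `1/(m+1)² = O(2^{-mα})`, which fails as `m → ∞`.
-/

lemma tent_eq_zero {u : ℝ} (h : u ≤ 0 ∨ 1 ≤ u) : tent u = 0 := if_pos h

lemma tent_of_mem_Icc_left {u : ℝ} (hu : u ∈ Icc 0 (1 / 2)) : tent u = 2 * u := by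
  obtain ⟨h0, h1⟩ := hu
  unfold tent
  split_ifs with h <;> (try obtain h | h := h) <;> linarith

lemma tent_of_mem_Icc_right {u : ℝ} (hu : u ∈ Icc (1 / 2) 1) : tent u = 2 - 2 * u := by
  obtain ⟨h0, h1⟩ := hu
  unfold tent
  split_ifs with h <;> (try obtain h | h := h) <;> linarith

lemma tent_fract_eq_tent_sub {r : ℤ} {x : ℝ} (hx : x ∈ Icc (r : ℝ) (r + 1)) :
    tent (Int.fract x) = tent (x - r) := by
  rcases hx.2.eq_or_lt with rfl | hlt
  · rw [show (r : ℝ) + 1 = ((r + 1 : ℤ) : ℝ) by push_cast; rfl, Int.fract_intCast,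
      tent_eq_zero (Or.inl le_rfl), tent_eq_zero (Or.inr (by push_cast; linarith))]
  · rw [← Int.fract_sub_intCast x r, Int.fract_eq_self.2 ⟨by linarith [hx.1], by linarith⟩]

lemma tent_fract_midpoint {j : ℤ} {u v : ℝ} (hu : u ∈ Icc (j / 2 : ℝ) ((j + 1) / 2))
    (hv : v ∈ Icc (j / 2 : ℝ) ((j + 1) / 2)) :
    tent (Int.fract ((u + v) / 2)) = (tent (Int.fract u) + tent (Int.fract v)) / 2 := by
  have hmid : (u + v) / 2 ∈ Icc (j / 2 : ℝ) ((j + 1) / 2) :=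
    ⟨by linarith [hu.1, hv.1], by linarith [hu.2, hv.2]⟩
  obtain ⟨r, rfl | rfl⟩ := Int.even_or_odd' j
  · have affine : ∀ x ∈ Icc (((2 * r : ℤ) : ℝ) / 2) (((2 * r : ℤ) + 1) / 2),
        tent (Int.fract x) = 2 * (x - r) := fun x ⟨h0, h1⟩ => by
      push_cast at h0 h1
      rw [tent_fract_eq_tent_sub (r := r) ⟨by linarith, by linarith⟩,
        tent_of_mem_Icc_left ⟨by linarith, by linarith⟩]
    rw [affine u hu, affine v hv, affine _ hmid]
    ring
  · have affine : ∀ x ∈ Icc (((2 * r + 1 : ℤ) : ℝ) / 2) (((2 * r + 1 : ℤ) + 1) / 2),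
        tent (Int.fract x) = 2 * (r + 1 - x) := fun x ⟨h0, h1⟩ => by
      push_cast at h0 h1
      rw [tent_fract_eq_tent_sub (r := r) ⟨by linarith, by linarith⟩,
        tent_of_mem_Icc_right ⟨by linarith, by linarith⟩]
      ring
    rw [affine u hu, affine v hv, affine _ hmid]
    ring

noncomputable def fsLevel (n : ℕ) (x : ℝ) : ℝ := ∑ i ∈ Finset.range (2 ^ n), fs n i x

lemma tent_sub_natCast_eq_zero {t : ℝ} (ht : 0 ≤ t) {i : ℕ} (hi : i ≠ ⌊t⌋₊) : tent (t - i) = 0 := by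
  refine tent_eq_zero ?_
  rcases hi.lt_or_gt with hi | hi
  · right
    have : (i : ℝ) + 1 ≤ ⌊t⌋₊ := by exact_mod_cast hi
    linarith [Nat.floor_le ht]
  · left
    have : (⌊t⌋₊ : ℝ) + 1 ≤ i := by exact_mod_cast hi
    linarith [Nat.lt_floor_add_one t]

lemma fsLevel_eq_tent_fract {n : ℕ} {x : ℝ} (hx : x ∈ Icc 0 1) :
    fsLevel n x = tent (Int.fract (2 ^ n * x)) := by
  have ht : 0 ≤ 2 ^ n * x := mul_nonneg (by positivity) hx.1
  have hfract : Int.fract (2 ^ n * x) = 2 ^ n * x - ⌊2 ^ n * x⌋₊ := by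
    rw [natCast_floor_eq_intCast_floor ht, Int.self_sub_floor]
  rw [hfract, fsLevel]
  unfold fs
  refine Finset.sum_eq_single _ (fun i _ hi => tent_sub_natCast_eq_zero ht hi) fun hout => ?_
  have hle : ((2 ^ n : ℕ) : ℝ) ≤ ⌊2 ^ n * x⌋₊ := by
    exact_mod_cast not_lt.1 (Finset.mem_range.not.1 hout)
  push_cast at hle
  have hx1 : 2 ^ n * x ≤ 2 ^ n := mul_le_of_le_one_right (by positivity) hx.2
  exact tent_eq_zero (Or.inl (by linarith))

lemma natCast_div_two_pow_mem_Icc {m k : ℕ} (hk : k ≤ 2 ^ m) : (k : ℝ) / 2 ^ m ∈ Icc 0 1 :=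
  ⟨by positivity, (div_le_one (by positivity)).2 (by exact_mod_cast hk)⟩

lemma fsLevel_dyadic_eq_zero {m n k : ℕ} (hmn : m ≤ n) (hk : k ≤ 2 ^ m) :
    fsLevel n ((k : ℝ) / 2 ^ m) = 0 := by
  have hscale : (2 : ℝ) ^ n * (k / 2 ^ m) = ((k * 2 ^ (n - m) : ℕ) : ℝ) := by
    rw [← Nat.sub_add_cancel hmn]
    push_cast
    rw [Nat.add_sub_cancel, pow_add]
    field_simp
  rw [fsLevel_eq_tent_fract (natCast_div_two_pow_mem_Icc hk), hscale, Int.fract_natCast,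
    tent_eq_zero (Or.inl le_rfl)]

lemma fsLevel_midpoint_eq_one {m k : ℕ} (hk : k + 1 ≤ 2 ^ m) :
    fsLevel m (((k : ℝ) / 2 ^ m + (k + 1) / 2 ^ m) / 2) = 1 := by
  have ha := natCast_div_two_pow_mem_Icc (m := m) (k := k) (by omega)
  have hb := natCast_div_two_pow_mem_Icc hk
  push_cast at hb
  have hscale : (2 : ℝ) ^ m * (((k : ℝ) / 2 ^ m + (k + 1) / 2 ^ m) / 2) = 1 / 2 + k := by
    field_simp
    ring
  rw [fsLevel_eq_tent_fract ⟨by linarith [ha.1, hb.1], by linarith [ha.2, hb.2]⟩, hscale,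
    Int.fract_add_natCast, Int.fract_eq_self.2 ⟨by norm_num, by norm_num⟩,
    tent_of_mem_Icc_left ⟨by norm_num, le_rfl⟩]
  norm_num

lemma exists_dyadic_Icc_subset_half_Icc {q : ℕ} (hq : 1 ≤ q) (k : ℕ) :
    ∃ j : ℕ, Icc ((k : ℝ) / 2 ^ q) ((k + 1) / 2 ^ q) ⊆ Icc ((j : ℝ) / 2) ((j + 1) / 2) := by
  set P := 2 ^ (q - 1) with hP
  have hPpos : 0 < P := by positivity
  have hq2 : (2 : ℝ) ^ q = 2 * P := by
    rw [hP]; push_cast; rw [← pow_succ', Nat.sub_add_cancel hq]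
  refine ⟨k / P, Icc_subset_Icc ?_ ?_⟩
  · have : ((k / P : ℕ) : ℝ) * P ≤ k := by exact_mod_cast Nat.div_mul_le_self k P
    rw [hq2, div_le_div_iff₀ (by norm_num) (by positivity)]
    nlinarith
  · have : k + 1 ≤ (k / P + 1) * P := by
      have := Nat.lt_div_mul_add (a := k) hPpos
      linarith
    have : (k : ℝ) + 1 ≤ ((k / P : ℕ) + 1) * P := by exact_mod_cast this
    rw [hq2, div_le_div_iff₀ (by positivity) (by norm_num)]
    nlinarith

lemma fsLevel_midpoint {m n k : ℕ} (hnm : n < m) (hk : k + 1 ≤ 2 ^ m) :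
    fsLevel n (((k : ℝ) / 2 ^ m + (k + 1) / 2 ^ m) / 2) =
      (fsLevel n ((k : ℝ) / 2 ^ m) + fsLevel n (((k : ℝ) + 1) / 2 ^ m)) / 2 := by
  have ha := natCast_div_two_pow_mem_Icc (m := m) (k := k) (by omega)
  have hb := natCast_div_two_pow_mem_Icc hk
  push_cast at hb
  rw [fsLevel_eq_tent_fract ha, fsLevel_eq_tent_fract hb,
    fsLevel_eq_tent_fract ⟨by linarith [ha.1, hb.1], by linarith [ha.2, hb.2]⟩]
  have hscale : ∀ y : ℝ, 2 ^ n * (y / 2 ^ m) = y / 2 ^ (m - n) := fun y => by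
    rw [← Nat.sub_add_cancel hnm.le, pow_add, Nat.add_sub_cancel]
    field_simp
  obtain ⟨j, hj⟩ := exists_dyadic_Icc_subset_half_Icc (q := m - n) (by omega) k
  have hkk : (k : ℝ) / 2 ^ (m - n) ≤ (k + 1) / 2 ^ (m - n) := by gcongr; linarith
  rw [mul_div_assoc', mul_add, hscale, hscale]
  exact tent_fract_midpoint (j := j) (by rw [Int.cast_natCast]; exact hj (left_mem_Icc.2 hkk))
    (by rw [Int.cast_natCast]; exact hj (right_mem_Icc.2 hkk))

noncomputable def schauderSeries (c : ℕ → ℝ) (x : ℝ) : ℝ := ∑' n : ℕ, c n * fsLevel n x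

lemma schauderSeries_dyadic (c : ℕ → ℝ) {m k : ℕ} (hk : k ≤ 2 ^ m) :
    schauderSeries c ((k : ℝ) / 2 ^ m) = ∑ n ∈ Finset.range m, c n * fsLevel n ((k : ℝ) / 2 ^ m) :=
  tsum_eq_sum fun n hn => by
    rw [fsLevel_dyadic_eq_zero (not_lt.1 (Finset.mem_range.not.1 hn)) hk, mul_zero]

lemma schauderSeries_midpoint_sub (c : ℕ → ℝ) {m k : ℕ} (hk : k + 1 ≤ 2 ^ m) :
    schauderSeries c (((k : ℝ) / 2 ^ m + (k + 1) / 2 ^ m) / 2) -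
      (schauderSeries c ((k : ℝ) / 2 ^ m) + schauderSeries c (((k : ℝ) + 1) / 2 ^ m)) / 2 =
        c m := by
  have hmid : ((k : ℝ) / 2 ^ m + (k + 1) / 2 ^ m) / 2 = ((2 * k + 1 : ℕ) : ℝ) / 2 ^ (m + 1) := by
    push_cast
    rw [pow_succ]
    ring
  have hb : ((k : ℝ) + 1) / 2 ^ m = ((k + 1 : ℕ) : ℝ) / 2 ^ m := by push_cast; rfl
  have hcoarse : ∑ n ∈ Finset.range m, c n * fsLevel n (((k : ℝ) / 2 ^ m + (k + 1) / 2 ^ m) / 2) =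
      (∑ n ∈ Finset.range m, c n * fsLevel n ((k : ℝ) / 2 ^ m) +
        ∑ n ∈ Finset.range m, c n * fsLevel n (((k : ℝ) + 1) / 2 ^ m)) / 2 := by
    rw [← Finset.sum_add_distrib, Finset.sum_div]
    refine Finset.sum_congr rfl fun n hn => ?_
    rw [fsLevel_midpoint (Finset.mem_range.1 hn) hk]
    ring
  have hSb : schauderSeries c (((k : ℝ) + 1) / 2 ^ m) =
      ∑ n ∈ Finset.range m, c n * fsLevel n (((k : ℝ) + 1) / 2 ^ m) := by
    rw [hb]; exact schauderSeries_dyadic c hk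
  have hSmid : schauderSeries c (((k : ℝ) / 2 ^ m + (k + 1) / 2 ^ m) / 2) =
      ∑ n ∈ Finset.range (m + 1), c n * fsLevel n (((k : ℝ) / 2 ^ m + (k + 1) / 2 ^ m) / 2) := by
    rw [hmid]; exact schauderSeries_dyadic c (by rw [pow_succ]; omega)
  rw [schauderSeries_dyadic c (m := m) (by omega), hSb, hSmid, Finset.sum_range_succ, hcoarse,
    fsLevel_midpoint_eq_one hk]
  ring

lemma abs_le_mul_rpow_of_div_rpow_le {u d h α C : ℝ} (hd : 0 < d) (hdh : d ≤ h) (hα : 0 ≤ α)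
    (hu : |u| / d ^ α ≤ C) : |u| ≤ C * h ^ α := by
  have hdα : 0 < d ^ α := Real.rpow_pos_of_pos hd α
  have hC : 0 ≤ C := (div_nonneg (abs_nonneg u) hdα.le).trans hu
  calc |u| ≤ C * d ^ α := (div_le_iff₀ hdα).1 hu
    _ ≤ C * h ^ α := mul_le_mul_of_nonneg_left (Real.rpow_le_rpow hd.le hdh hα) hC

lemma midpoint_sub_average_le (f : ℝ → ℝ) {a b x₀ M : ℝ} (hab : a ≤ b)
    (h : ∀ y ∈ Icc a b, |f y - f x₀| ≤ M) : f ((a + b) / 2) - (f a + f b) / 2 ≤ 2 * M := by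
  have hc := h ((a + b) / 2) ⟨by linarith, by linarith⟩
  have ha := h a ⟨le_rfl, hab⟩
  have hb := h b ⟨hab, le_rfl⟩
  rw [abs_le] at hc ha hb
  linarith [hc.2, ha.1, hb.1]

lemma tendsto_two_div_two_pow : Tendsto (fun m : ℕ => (2 : ℝ) / 2 ^ m) atTop (𝓝 0) :=
  tendsto_const_nhds.div_atTop (tendsto_pow_atTop_atTop_of_one_lt one_lt_two)

lemma eventually_mul_two_div_two_pow_rpow_lt {α : ℝ} (hα : 0 < α) (C : ℝ) :
    ∀ᶠ m : ℕ in atTop, 2 * C * (2 / 2 ^ m) ^ α < 1 / ((m : ℝ) + 1) ^ 2 := by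
  have hr : 1 < (2 : ℝ) ^ α := Real.one_lt_rpow one_lt_two hα
  have hlim : Tendsto (fun m : ℕ => ((m : ℝ) + 1) ^ 2 / ((2 : ℝ) ^ α) ^ m) atTop (𝓝 0) := by
    have := ((tendsto_pow_const_div_const_pow_of_one_lt 2 hr).comp
      (tendsto_add_atTop_nat 1)).const_mul ((2 : ℝ) ^ α)
    rw [mul_zero] at this
    refine this.congr fun m => ?_
    simp only [Function.comp_apply, Nat.cast_add, Nat.cast_one, pow_succ]
    field_simp
  have hsmall := (hlim.const_mul (2 * C * 2 ^ α)).eventually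
    (gt_mem_nhds (by rw [mul_zero]; exact one_pos))
  filter_upwards [hsmall] with m hm
  rw [Real.div_rpow zero_le_two (by positivity), ← Real.rpow_pow_comm zero_le_two,
    lt_div_iff₀ (by positivity)]
  calc 2 * C * (2 ^ α / (2 ^ α) ^ m) * ((m : ℝ) + 1) ^ 2
      = 2 * C * 2 ^ α * (((m : ℝ) + 1) ^ 2 / ((2 : ℝ) ^ α) ^ m) := by ring
    _ < 1 := hm

lemma exists_dyadic_Icc_subset_Ioc {x₀ : ℝ} (hx₀ : 0 ≤ x₀) (m : ℕ) :
    ∃ k : ℕ, Icc ((k : ℝ) / 2 ^ m) ((k + 1) / 2 ^ m) ⊆ Ioc x₀ (x₀ + 2 / 2 ^ m) := by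
  have h2m : (0 : ℝ) < 2 ^ m := by positivity
  have hfl := Nat.floor_le (mul_nonneg h2m.le hx₀)
  have hlt := Nat.lt_floor_add_one ((2 : ℝ) ^ m * x₀)
  refine ⟨⌊(2 : ℝ) ^ m * x₀⌋₊ + 1, fun y ⟨hy₁, hy₂⟩ => ⟨?_, ?_⟩⟩
  · refine lt_of_lt_of_le ?_ hy₁
    rw [lt_div_iff₀ h2m]
    push_cast
    linarith
  · refine hy₂.trans ?_
    rw [div_le_iff₀ h2m, add_mul, div_mul_cancel₀ _ h2m.ne']
    push_cast
    linarith

lemma exists_dyadic_Icc_subset_Ico {x₀ : ℝ} {m : ℕ} (hx₀ : 2 / 2 ^ m ≤ x₀) :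
    ∃ k : ℕ, Icc ((k : ℝ) / 2 ^ m) ((k + 1) / 2 ^ m) ⊆ Ico (x₀ - 2 / 2 ^ m) x₀ := by
  have h2m : (0 : ℝ) < 2 ^ m := by positivity
  have h2 : 2 ≤ (2 : ℝ) ^ m * x₀ := by rwa [div_le_iff₀ h2m, mul_comm] at hx₀
  have hcl := Nat.le_ceil ((2 : ℝ) ^ m * x₀)
  have hcu := Nat.ceil_lt_add_one (by linarith : (0 : ℝ) ≤ 2 ^ m * x₀)
  have hc2 : 2 ≤ ⌈(2 : ℝ) ^ m * x₀⌉₊ := by exact_mod_cast h2.trans hcl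
  refine ⟨⌈(2 : ℝ) ^ m * x₀⌉₊ - 2, fun y ⟨hy₁, hy₂⟩ => ⟨?_, ?_⟩⟩
  · refine le_trans ?_ hy₁
    rw [le_div_iff₀ h2m, sub_mul, div_mul_cancel₀ _ h2m.ne', Nat.cast_sub hc2]
    push_cast
    linarith
  · refine lt_of_le_of_lt hy₂ ?_
    rw [div_lt_iff₀ h2m, Nat.cast_sub hc2]
    push_cast
    linarith

section NonHolder

local notation "f" => schauderSeries fun n => 1 / ((n : ℝ) + 1) ^ 2

theorem schauderSeries_not_holder_within {x₀ α : ℝ} (hα : 0 < α) {s : Set ℝ}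
    (hs : s ⊆ Icc 0 1) (hx₀ : x₀ ∉ s)
    (hdyadic : ∀ᶠ m : ℕ in atTop,
      ∃ k : ℕ, Icc ((k : ℝ) / 2 ^ m) ((k + 1) / 2 ^ m) ⊆ s ∩ Metric.closedBall x₀ (2 / 2 ^ m)) :
    ¬ ∃ C : ℝ, ∀ᶠ y in 𝓝[s] x₀, |f y - f x₀| / |y - x₀| ^ α ≤ C := by
  rintro ⟨C, hC⟩
  obtain ⟨ε, hε, hball⟩ := Metric.mem_nhdsWithin_iff.1 hC
  obtain ⟨m, ⟨k, hk⟩, hmε, hdecay⟩ := (hdyadic.and ((tendsto_two_div_two_pow.eventually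
    (gt_mem_nhds hε)).and (eventually_mul_two_div_two_pow_rpow_lt hα C))).exists
  have hbound : ∀ y ∈ Icc ((k : ℝ) / 2 ^ m) ((k + 1) / 2 ^ m),
      |f y - f x₀| ≤ C * (2 / 2 ^ m) ^ α := fun y hy => by
    obtain ⟨hys, hyx⟩ := hk hy
    rw [Metric.mem_closedBall, Real.dist_eq] at hyx
    exact abs_le_mul_rpow_of_div_rpow_le (abs_pos.2 (sub_ne_zero.2 (ne_of_mem_of_not_mem hys hx₀)))
      hyx hα.le (hball ⟨Metric.mem_ball.2 (by rw [Real.dist_eq]; linarith), hys⟩)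
  have hab : (k : ℝ) / 2 ^ m ≤ (k + 1) / 2 ^ m := by gcongr; linarith
  have hk₁ : k + 1 ≤ 2 ^ m := by
    have := (hs (hk ⟨hab, le_rfl⟩).1).2
    rw [div_le_one (by positivity)] at this
    exact_mod_cast this
  have hdefect := midpoint_sub_average_le _ hab hbound
  rw [schauderSeries_midpoint_sub _ hk₁] at hdefect
  linarith

theorem schauderSeries_not_holderRightAt {x₀ α : ℝ} (hα : 0 < α) (hx₀ : x₀ ∈ Ico 0 1) :
    ¬ HolderRightAt f α x₀ := by
  refine schauderSeries_not_holder_within hα (fun y hy => ⟨hx₀.1.trans hy.1.le, hy.2⟩)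
    (fun h => lt_irrefl _ h.1) ?_
  filter_upwards [tendsto_two_div_two_pow.eventually (ge_mem_nhds (sub_pos.2 hx₀.2))] with m hm
  obtain ⟨k, hk⟩ := exists_dyadic_Icc_subset_Ioc hx₀.1 m
  refine ⟨k, fun y hy => ?_⟩
  obtain ⟨hy₁, hy₂⟩ := hk hy
  refine ⟨⟨hy₁, by linarith⟩, ?_⟩
  rw [Metric.mem_closedBall, Real.dist_eq, abs_of_pos (sub_pos.2 hy₁)]
  linarith

theorem schauderSeries_not_holderLeftAt {x₀ α : ℝ} (hα : 0 < α) (hx₀ : x₀ ∈ Ioc 0 1) :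
    ¬ HolderLeftAt f α x₀ := by
  refine schauderSeries_not_holder_within hα (fun y hy => ⟨hy.1, hy.2.le.trans hx₀.2⟩)
    (fun h => lt_irrefl _ h.2) ?_
  filter_upwards [tendsto_two_div_two_pow.eventually (ge_mem_nhds hx₀.1)] with m hm
  obtain ⟨k, hk⟩ := exists_dyadic_Icc_subset_Ico hm
  refine ⟨k, fun y hy => ?_⟩
  obtain ⟨hy₁, hy₂⟩ := hk hy
  refine ⟨⟨by linarith, hy₂⟩, ?_⟩
  rw [Metric.mem_closedBall, Real.dist_eq, abs_of_neg (sub_neg.2 hy₂)]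
  linarith

end NonHolder

/-- the function `f = Σ_{n≥0} (n+1)^{-2} Σ_i σ_{n,i}` is completely
non-Hölder. -/
theorem stmt11 :
    CompletelyNonHolder
      (fun x => ∑' n : ℕ, (1 / ((n : ℝ) + 1) ^ 2) * ∑ i ∈ Finset.range (2 ^ n), fs n i x) :=
  fun _ hx₀ _ hα =>
    ⟨fun hx₁ => schauderSeries_not_holderRightAt hα.1 ⟨hx₀.1, hx₁⟩,
      fun hx₁ => schauderSeries_not_holderLeftAt hα.1 ⟨hx₁, hx₀.2⟩⟩
end

section
/- Let f : [0,1] → ℝ be α-Hölder continuous for some α > 1/2 and nowhere differentiable, and let F : ℝ → ℝ be twice continuously differentiable. Then for x₀ ∈ (0,1), F ∘ f is differentiable at x₀ if and only if F′(f(x₀)) = 0; moreover the same equivalence holds for one-sided derivatives. -/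
open Filter Set Topology MeasureTheory ProbabilityTheory

/-!
If `F' (f x₀) ≠ 0`, then `F` has a differentiable local inverse near `f x₀`, so a (one-sided)
derivative of `F ∘ f` at `x₀` would produce one of `f`. If `F' (f x₀) = 0`, then
`F b - F (f x₀) = O((b - f x₀)²)`, and the Hölder bound turns this into
`F (f y) - F (f x₀) = O(|y - x₀| ^ (2α))` with `2α > 1`, so `F ∘ f` has derivative `0` at `x₀`.
-/

open Asymptotics

section

variable {E : Type*} [NormedAddCommGroup E] [NormedSpace ℝ E]

theorem isBigO_sub_pow_succ_of_hasDerivAt {f f' : ℝ → E} {x₀ : ℝ} {n : ℕ}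
    (hff' : ∀ᶠ x in 𝓝 x₀, HasDerivAt f (f' x) x) (hf' : f' =O[𝓝 x₀] fun x ↦ (x - x₀) ^ n) :
    (fun x ↦ f x - f x₀) =O[𝓝 x₀] fun x ↦ (x - x₀) ^ (n + 1) := by
  obtain ⟨c, hc0, hc⟩ := hf'.exists_nonneg
  have hseg : ∀ᶠ x in 𝓝 x₀, ∀ y ∈ segment ℝ x₀ x,
      HasDerivAt f (f' y) y ∧ ‖f' y‖ ≤ c * ‖(y - x₀) ^ n‖ := by
    simpa only [nhdsWithin_univ] using convex_univ.eventually_nhdsWithin_segment (mem_univ x₀)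
      (by simpa only [nhdsWithin_univ] using hff'.and hc.bound)
  refine IsBigO.of_bound c ?_
  filter_upwards [hseg] with x hx
  have hbound : ∀ y ∈ segment ℝ x₀ x, ‖f' y‖ ≤ c * ‖x - x₀‖ ^ n := fun y hy ↦
    (hx y hy).2.trans (by rw [norm_pow]; gcongr; exact norm_sub_le_of_mem_segment hy)
  calc ‖f x - f x₀‖ ≤ c * ‖x - x₀‖ ^ n * ‖x - x₀‖ :=
        (convex_segment x₀ x).norm_image_sub_le_of_norm_hasDerivWithin_le
          (fun y hy ↦ (hx y hy).1.hasDerivWithinAt) hbound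
          (left_mem_segment ℝ x₀ x) (right_mem_segment ℝ x₀ x)
    _ = c * ‖(x - x₀) ^ (n + 1)‖ := by rw [norm_pow, pow_succ, mul_assoc]

theorem isBigO_sub_sq_of_deriv_eq_zero {F : ℝ → E} {c : ℝ}
    (hF : ∀ᶠ b in 𝓝 c, DifferentiableAt ℝ F b) (hF' : DifferentiableAt ℝ (deriv F) c)
    (hc : deriv F c = 0) :
    (fun b ↦ F b - F c) =O[𝓝 c] fun b ↦ (b - c) ^ 2 := by
  refine isBigO_sub_pow_succ_of_hasDerivAt (hF.mono fun b hb ↦ hb.hasDerivAt) ?_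
  simpa [hc] using hF'.isBigO_sub

end

theorem tendsto_abs_sub_rpow_nhds_zero {β : ℝ} (hβ : 0 < β) (x : ℝ) :
    Tendsto (fun y ↦ |y - x| ^ β) (𝓝 x) (𝓝 0) := by
  have h : Continuous fun y ↦ |y - x| ^ β :=
    (continuous_id.sub continuous_const).abs.rpow_const fun _ ↦ Or.inr hβ.le
  simpa [Real.zero_rpow hβ.ne'] using h.tendsto x

theorem abs_sub_rpow_isLittleO_sub {β : ℝ} (hβ : 1 < β) (x : ℝ) :
    (fun y ↦ |y - x| ^ β) =o[𝓝 x] fun y ↦ y - x := by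
  have h : (fun y ↦ |y - x| ^ (β - 1) * (y - x)) =o[𝓝 x] fun y ↦ (1 : ℝ) * (y - x) :=
    (isLittleO_one_iff ℝ |>.2 (tendsto_abs_sub_rpow_nhds_zero (sub_pos.2 hβ) x)).mul_isBigO
      (isBigO_refl _ _)
  refine (h.norm_left.congr_left fun y ↦ ?_).congr_right fun y ↦ one_mul _
  rw [norm_mul, Real.norm_eq_abs, abs_of_nonneg (by positivity), Real.norm_eq_abs,
    ← Real.rpow_add_one' (abs_nonneg _) (by linarith), sub_add_cancel]

theorem hasDerivAt_zero_of_isBigO_abs_sub_rpow {g : ℝ → ℝ} {x β : ℝ} (hβ : 1 < β)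
    (hg : (fun y ↦ g y - g x) =O[𝓝 x] fun y ↦ |y - x| ^ β) : HasDerivAt g 0 x := by
  rw [hasDerivAt_iff_isLittleO]
  simpa using hg.trans_isLittleO (abs_sub_rpow_isLittleO_sub hβ x)

theorem isBigO_sub_abs_sub_rpow_of_holderOn {f : ℝ → ℝ} {s : Set ℝ} {C α x₀ : ℝ}
    (hf : ∀ x ∈ s, ∀ y ∈ s, |f x - f y| ≤ C * |x - y| ^ α) (hs : s ∈ 𝓝 x₀) :
    (fun y ↦ f y - f x₀) =O[𝓝 x₀] fun y ↦ |y - x₀| ^ α := by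
  refine IsBigO.of_bound C ?_
  filter_upwards [hs] with y hy
  rw [Real.norm_eq_abs, Real.norm_of_nonneg (by positivity)]
  exact hf y hy x₀ (mem_of_mem_nhds hs)

theorem tendsto_of_isBigO_sub_abs_sub_rpow {f : ℝ → ℝ} {x₀ α : ℝ} (hα : 0 < α)
    (hf : (fun y ↦ f y - f x₀) =O[𝓝 x₀] fun y ↦ |y - x₀| ^ α) :
    Tendsto f (𝓝 x₀) (𝓝 (f x₀)) :=
  tendsto_sub_nhds_zero_iff.1 (hf.trans_tendsto (tendsto_abs_sub_rpow_nhds_zero hα x₀))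

theorem hasDerivAt_comp_zero_of_isBigO {f F : ℝ → ℝ} {x₀ α : ℝ} (hα : 1 / 2 < α)
    (hf : (fun y ↦ f y - f x₀) =O[𝓝 x₀] fun y ↦ |y - x₀| ^ α)
    (hF : (fun b ↦ F b - F (f x₀)) =O[𝓝 (f x₀)] fun b ↦ (b - f x₀) ^ 2) :
    HasDerivAt (F ∘ f) 0 x₀ := by
  have hcomp : (fun y ↦ F (f y) - F (f x₀)) =O[𝓝 x₀] fun y ↦ (|y - x₀| ^ α) ^ 2 :=
    (hF.comp_tendsto (tendsto_of_isBigO_sub_abs_sub_rpow (by linarith) hf)).trans (hf.pow 2)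
  refine hasDerivAt_zero_of_isBigO_abs_sub_rpow (β := 2 * α) (by linarith) ?_
  refine hcomp.congr_right fun y ↦ ?_
  rw [← Real.rpow_natCast, ← Real.rpow_mul (abs_nonneg _), mul_comm]
  norm_num

theorem HasStrictDerivAt.differentiableWithinAt_of_comp {f F : ℝ → ℝ} {s : Set ℝ} {x₀ F' : ℝ}
    (hF : HasStrictDerivAt F F' (f x₀)) (hF' : F' ≠ 0) (hf : ContinuousAt f x₀)
    (h : DifferentiableWithinAt ℝ (F ∘ f) s x₀) : DifferentiableWithinAt ℝ f s x₀ := by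
  have hinv := hF.to_localInverse hF'
  have hleft : ∀ᶠ y in 𝓝 x₀, hF.localInverse F F' (f x₀) hF' (F (f y)) = f y :=
    hf.eventually (hF.hasStrictFDerivAt_equiv hF').eventually_left_inverse
  exact (hinv.hasDerivAt.differentiableAt.comp_differentiableWithinAt x₀ h).congr_of_eventuallyEq
    ((hleft.filter_mono nhdsWithin_le_nhds).mono fun _ hy ↦ hy.symm) hleft.self_of_nhds.symm

/-- if `f` is `α`-Hölder on `[0,1]` for some `α > 1/2` and nowhere
differentiable on `(0,1)`, and `F` is `C²`, then `F ∘ f` is differentiable at `x₀ ∈ (0,1)`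
iff `F'(f x₀) = 0`; the same equivalence holds for one-sided derivatives (under the
hypothesis that `f` has nowhere a one-sided derivative). -/
theorem stmt13 (f F : ℝ → ℝ) (α C : ℝ) (hα : 1 / 2 < α)
    (hHolder : ∀ x ∈ Set.Icc (0 : ℝ) 1, ∀ y ∈ Set.Icc (0 : ℝ) 1,
      |f x - f y| ≤ C * |x - y| ^ α)
    (hF : ContDiff ℝ 2 F) (x₀ : ℝ) (hx₀ : x₀ ∈ Set.Ioo (0 : ℝ) 1) :
    ((∀ x ∈ Set.Ioo (0 : ℝ) 1, ¬ DifferentiableAt ℝ f x) →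
      (DifferentiableAt ℝ (F ∘ f) x₀ ↔ deriv F (f x₀) = 0)) ∧
    ((∀ x ∈ Set.Ioo (0 : ℝ) 1, ¬ DifferentiableWithinAt ℝ f (Set.Ici x) x ∧
        ¬ DifferentiableWithinAt ℝ f (Set.Iic x) x) →
      ((DifferentiableWithinAt ℝ (F ∘ f) (Set.Ici x₀) x₀ ↔ deriv F (f x₀) = 0) ∧
       (DifferentiableWithinAt ℝ (F ∘ f) (Set.Iic x₀) x₀ ↔ deriv F (f x₀) = 0))) := by
  have hf := isBigO_sub_abs_sub_rpow_of_holderOn hHolder (Icc_mem_nhds hx₀.1 hx₀.2)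
  have hcont : ContinuousAt f x₀ := tendsto_of_isBigO_sub_abs_sub_rpow (by linarith) hf
  have hF1 : ContDiff ℝ 1 (deriv F) := hF.iterate_deriv' 1 1
  have hcrit (h : deriv F (f x₀) = 0) : HasDerivAt (F ∘ f) 0 x₀ :=
    hasDerivAt_comp_zero_of_isBigO hα hf <| isBigO_sub_sq_of_deriv_eq_zero
      (.of_forall (hF.differentiable (by norm_num))) (hF1.differentiable one_ne_zero _) h
  have hdiff_iff (s : Set ℝ) (hs : ¬ DifferentiableWithinAt ℝ f s x₀) :
      DifferentiableWithinAt ℝ (F ∘ f) s x₀ ↔ deriv F (f x₀) = 0 :=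
    ⟨fun h ↦ by_contra fun hne ↦ hs <|
        (hF.contDiffAt.hasStrictDerivAt (by norm_num)).differentiableWithinAt_of_comp hne hcont h,
      fun h ↦ (hcrit h).differentiableAt.differentiableWithinAt⟩
  refine ⟨fun hnd ↦ ?_, fun hnd ↦ ⟨hdiff_iff _ (hnd x₀ hx₀).1, hdiff_iff _ (hnd x₀ hx₀).2⟩⟩
  simpa only [differentiableWithinAt_univ] using
    hdiff_iff univ (differentiableWithinAt_univ.not.2 (hnd x₀ hx₀))
end

section
/- Takagi's function T(x) = Σ_{n≥0} 2^{−n} Σ_{i=0}^{2ⁿ−1} σ_{n,i}(x) satisfies |T(x+h) − T(x)| ≤ C·|h|·log(1/|h|) for some absolute constant C, all x ∈ [0,1] and all h with x+h ∈ [0,1], 0 < |h| < 1/2. -/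
open Filter Set Topology MeasureTheory ProbabilityTheory

/-- Takagi's function `T(x) = Σ_{n≥0} 2^{-n} Σ_{i=0}^{2ⁿ-1} σ_{n,i}(x)`. -/
noncomputable def takagi (x : ℝ) : ℝ :=
  ∑' n : ℕ, ((1 : ℝ) / 2) ^ n * ∑ i ∈ Finset.range (2 ^ n), fs n i x


/-!
On `[0, 1]` the inner sum of the `n`-th term of the series is `2 dist(2ⁿx, ℤ)`, so the `n`-th term
is `2`-Lipschitz and bounded by `2⁻ⁿ`. Bounding the first `N` increments by `2|h|` and the rest
by `2 · 2⁻ⁿ` gives `|T(x+h) - T(x)| ≤ 2N|h| + 4 · 2⁻ᴺ`; take `N ≈ log₂(1/|h|)`.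
-/

lemma tent_of_mem_Ico {t : ℝ} (ht : t ∈ Set.Ico (0 : ℝ) 1) : tent t = 2 * min t (1 - t) := by
  unfold tent
  split_ifs with h₁ h₂
  · obtain rfl : t = 0 := le_antisymm (h₁.resolve_right ht.2.not_ge) ht.1
    norm_num
  · rw [min_eq_left (by linarith)]
  · rw [min_eq_right (by linarith)]; ring

lemma tent_fract (y : ℝ) : tent (Int.fract y) = 2 * |y - round y| := by
  rw [abs_sub_round_eq_min, tent_of_mem_Ico ⟨Int.fract_nonneg y, Int.fract_lt_one y⟩]

lemma tent_sub_natCast {y : ℝ} (hy : 0 ≤ y) (i : ℕ) :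
    tent (y - i) = if ⌊y⌋₊ = i then 2 * |y - round y| else 0 := by
  split_ifs with hi
  · rw [← hi, ← tent_fract, Int.fract, ← Int.natCast_floor_eq_floor hy, Int.cast_natCast]
  · unfold tent
    rw [if_pos]
    rcases Nat.lt_or_gt_of_ne hi with hlt | hlt
    · have : (⌊y⌋₊ : ℝ) + 1 ≤ i := by exact_mod_cast hlt
      left
      linarith [Nat.lt_floor_add_one y]
    · have : (i : ℝ) + 1 ≤ ⌊y⌋₊ := by exact_mod_cast hlt
      right
      linarith [Nat.floor_le hy]

lemma sum_range_tent_sub_natCast {y : ℝ} {N : ℕ} (hy₀ : 0 ≤ y) (hyN : y ≤ N) :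
    ∑ i ∈ Finset.range N, tent (y - i) = 2 * |y - round y| := by
  simp only [tent_sub_natCast hy₀, Finset.sum_ite_eq, Finset.mem_range]
  split_ifs with h
  · rfl
  · have hNy : (N : ℝ) ≤ ⌊y⌋₊ := by exact_mod_cast not_lt.1 h
    obtain rfl : y = N := le_antisymm hyN (hNy.trans (Nat.floor_le hy₀))
    simp

lemma abs_abs_sub_round_sub_abs_sub_round_le (a b : ℝ) :
    |(|a - round a| - |b - round b|)| ≤ |a - b| := by
  have ha := round_le a (round b)
  have hb := round_le b (round a)
  rw [abs_sub_le_iff]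
  constructor
  · linarith [abs_sub_le a b (round b)]
  · linarith [abs_sub_le b a (round a), abs_sub_comm a b]

lemma abs_tsum_le_of_le_of_le_geometric {a : ℕ → ℝ} {c b r : ℝ} (hr₀ : 0 ≤ r) (hr₁ : r < 1)
    (hc : ∀ n, |a n| ≤ c) (hb : ∀ n, |a n| ≤ b * r ^ n) (N : ℕ) :
    |∑' n, a n| ≤ N * c + b * r ^ N / (1 - r) := by
  have ha : Summable a :=
    .of_norm_bounded ((summable_geometric_of_lt_one hr₀ hr₁).mul_left b) hb
  have head : |∑ n ∈ Finset.range N, a n| ≤ N * c := by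
    calc |∑ n ∈ Finset.range N, a n| ≤ ∑ n ∈ Finset.range N, |a n| :=
          Finset.abs_sum_le_sum_abs _ _
      _ ≤ N * c := by
        simpa using Finset.sum_le_card_nsmul (Finset.range N) _ _ fun n _ => hc n
  have tail : |∑' n, a (n + N)| ≤ b * r ^ N / (1 - r) := by
    have hg := (hasSum_geometric_of_lt_one hr₀ hr₁).mul_left (b * r ^ N)
    rw [div_eq_mul_inv]
    refine tsum_of_norm_bounded (f := fun n => a (n + N)) hg fun n => ?_
    calc ‖a (n + N)‖ ≤ b * r ^ (n + N) := hb (n + N)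
      _ = b * r ^ N * r ^ n := by ring
  rw [← ha.sum_add_tsum_nat_add N]
  exact (abs_add_le _ _).trans (add_le_add head tail)

lemma exists_half_pow_le_and_mul_log_two_le {t : ℝ} (ht₀ : 0 < t) (ht : t < 1 / 2) :
    ∃ N : ℕ, (1 / 2 : ℝ) ^ N ≤ t ∧ N * Real.log 2 ≤ 2 * Real.log (1 / t) := by
  have hlog2 : 0 < Real.log 2 := Real.log_pos one_lt_two
  have hlog : Real.log 2 < Real.log (1 / t) :=
    Real.log_lt_log two_pos (by rw [lt_div_iff₀ ht₀]; linarith)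
  set L := Real.log (1 / t) / Real.log 2
  have hL : 1 < L := by rwa [one_lt_div hlog2]
  refine ⟨⌈L⌉₊, ?_, ?_⟩
  · have : Real.log (1 / t) ≤ ⌈L⌉₊ * Real.log 2 := (div_le_iff₀ hlog2).1 (Nat.le_ceil L)
    rw [← Real.log_le_log_iff (by positivity) ht₀, Real.log_pow, one_div, Real.log_inv]
    rw [one_div, Real.log_inv] at this
    linarith
  · have : (⌈L⌉₊ : ℝ) ≤ 2 * L := by linarith [Nat.ceil_lt_add_one (zero_le_one.trans hL.le)]
    calc (⌈L⌉₊ : ℝ) * Real.log 2 ≤ 2 * L * Real.log 2 := by gcongr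
      _ = 2 * Real.log (1 / t) := by rw [mul_assoc, div_mul_cancel₀ _ hlog2.ne']

noncomputable def takagiTerm (n : ℕ) (x : ℝ) : ℝ :=
  ((1 : ℝ) / 2) ^ n * ∑ i ∈ Finset.range (2 ^ n), fs n i x

section takagiTerm

variable {x y : ℝ}

lemma takagiTerm_eq (n : ℕ) (hx : x ∈ Set.Icc (0 : ℝ) 1) :
    takagiTerm n x = (1 / 2) ^ n * (2 * |2 ^ n * x - round (2 ^ n * x)|) := by
  have hy₀ : 0 ≤ (2 : ℝ) ^ n * x := mul_nonneg (by positivity) hx.1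
  have hyN : (2 : ℝ) ^ n * x ≤ ((2 ^ n : ℕ) : ℝ) := by
    push_cast
    exact mul_le_of_le_one_right (by positivity) hx.2
  rw [takagiTerm, ← sum_range_tent_sub_natCast hy₀ hyN]
  rfl

lemma abs_takagiTerm_le (n : ℕ) (hx : x ∈ Set.Icc (0 : ℝ) 1) :
    |takagiTerm n x| ≤ (1 / 2) ^ n := by
  rw [takagiTerm_eq n hx, abs_of_nonneg (by positivity)]
  have := abs_sub_round (2 ^ n * x)
  exact mul_le_of_le_one_right (by positivity) (by linarith)

lemma abs_takagiTerm_sub_le (n : ℕ) (hx : x ∈ Set.Icc (0 : ℝ) 1) (hy : y ∈ Set.Icc (0 : ℝ) 1) :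
    |takagiTerm n y - takagiTerm n x| ≤ 2 * |y - x| := by
  rw [takagiTerm_eq n hx, takagiTerm_eq n hy, ← mul_sub, ← mul_sub, abs_mul, abs_mul,
    abs_of_nonneg (by positivity : (0 : ℝ) ≤ (1 / 2) ^ n), abs_two]
  calc (1 / 2) ^ n * (2 * |(|2 ^ n * y - round (2 ^ n * y)| - |2 ^ n * x - round (2 ^ n * x)|)|)
      ≤ (1 / 2) ^ n * (2 * |2 ^ n * y - 2 ^ n * x|) := by
        gcongr (1 / 2) ^ n * (2 * ?_)
        exact abs_abs_sub_round_sub_abs_sub_round_le _ _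
    _ = 2 * |y - x| := by
        rw [← mul_sub, abs_mul, abs_of_pos (by positivity : (0 : ℝ) < 2 ^ n)]
        have : (1 / 2 : ℝ) ^ n * 2 ^ n = 1 := by rw [← mul_pow]; norm_num
        linear_combination 2 * |y - x| * this

lemma abs_takagi_sub_le (hx : x ∈ Set.Icc (0 : ℝ) 1) (hy : y ∈ Set.Icc (0 : ℝ) 1) (N : ℕ) :
    |takagi y - takagi x| ≤ N * (2 * |y - x|) + 4 * (1 / 2) ^ N := by
  have summable {z : ℝ} (hz : z ∈ Set.Icc (0 : ℝ) 1) : Summable (takagiTerm · z) :=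
    .of_norm_bounded (summable_geometric_of_lt_one (by norm_num) (by norm_num))
      fun n => abs_takagiTerm_le n hz
  have hsub : takagi y - takagi x = ∑' n, (takagiTerm n y - takagiTerm n x) :=
    ((summable hy).tsum_sub (summable hx)).symm
  have bound := abs_tsum_le_of_le_of_le_geometric (b := 2) (r := 1 / 2) (by norm_num) (by norm_num)
    (fun n => abs_takagiTerm_sub_le n hx hy)
    (fun n => (abs_sub _ _).trans (by linarith [abs_takagiTerm_le n hx, abs_takagiTerm_le n hy])) N
  rw [hsub]
  convert bound using 2
  ring

end takagiTerm

/-- Takagi's function satisfies `|T(x+h) - T(x)| ≤ C |h| log(1/|h|)` for an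
absolute constant `C`, all `x ∈ [0,1]` and all `h` with `x + h ∈ [0,1]` and `0 < |h| < 1/2`. -/
theorem stmt16 :
    ∃ C : ℝ, ∀ x ∈ Set.Icc (0 : ℝ) 1, ∀ h : ℝ, x + h ∈ Set.Icc (0 : ℝ) 1 →
      0 < |h| → |h| < 1 / 2 →
      |takagi (x + h) - takagi x| ≤ C * |h| * Real.log (1 / |h|) := by
  refine ⟨8 / Real.log 2, fun x hx h hxh hh₀ hh => ?_⟩
  obtain ⟨N, hN, hNlog⟩ := exists_half_pow_le_and_mul_log_two_le hh₀ hh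
  have hlog2 : 0 < Real.log 2 := Real.log_pos one_lt_two
  have hlog : Real.log 2 ≤ Real.log (1 / |h|) :=
    Real.log_le_log two_pos (by rw [le_div_iff₀ hh₀]; linarith)
  have hT := abs_takagi_sub_le hx hxh N
  rw [add_sub_cancel_left] at hT
  rw [mul_assoc, div_mul_eq_mul_div, le_div_iff₀ hlog2]
  calc |takagi (x + h) - takagi x| * Real.log 2
      ≤ (N * (2 * |h|) + 4 * |h|) * Real.log 2 := by gcongr; linarith
    _ = 2 * |h| * (N * Real.log 2) + 4 * |h| * Real.log 2 := by ring
    _ ≤ 2 * |h| * (2 * Real.log (1 / |h|)) + 4 * |h| * Real.log (1 / |h|) := by gcongr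
    _ = 8 * (|h| * Real.log (1 / |h|)) := by ring
end

section
/- Attach to each vertex of the infinite binary tree an independent standard normal random variable; call a vertex at level n exceptional if the absolute value of its variable is less than 2^{−εn}, for a fixed ε > 0. Then almost surely every infinite branch of the tree contains infinitely many non-exceptional vertices. -/
/-!
A standard Gaussian puts mass at most `δ` on `(-δ, δ)`, so a vertex at level `n ≥ L` is
exceptional with probability at most `δ = 2^{-εL}`, and `δ < 1/2` once `εL > 1`. A branch that is
exceptional from level `L` on passes through some vertex `j` of level `L + k` along a path of
exceptional vertices; by independence and the union bound over the `2^{L+k}` choices of `j` this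
has probability at most `2^{L+k} δ^{k+1} = 2^L δ (2δ)^k → 0`. A countable union over the
starting level finishes.
-/

open Filter Set Topology MeasureTheory ProbabilityTheory

open scoped NNReal ENNReal

lemma gaussianPDFReal_one_le_half (μ x : ℝ) : gaussianPDFReal μ 1 x ≤ 1 / 2 := by
  have hsqrt : 2 ≤ √(2 * Real.pi * ((1 : ℝ≥0) : ℝ)) := by
    rw [NNReal.coe_one, mul_one, Real.le_sqrt (by norm_num) (by positivity)]
    linarith [Real.pi_gt_three]
  have hexp : Real.exp (-(x - μ) ^ 2 / (2 * ((1 : ℝ≥0) : ℝ))) ≤ 1 :=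
    Real.exp_le_one_iff.2 (by have := sq_nonneg (x - μ); push_cast; linarith)
  calc gaussianPDFReal μ 1 x ≤ 2⁻¹ * 1 :=
        mul_le_mul (inv_anti₀ two_pos hsqrt) hexp (Real.exp_nonneg _) (by norm_num)
    _ = 1 / 2 := by norm_num

lemma gaussianReal_one_le_smul_volume (μ : ℝ) : gaussianReal μ 1 ≤ (2 : ℝ≥0∞)⁻¹ • volume := by
  rw [gaussianReal_of_var_ne_zero μ one_ne_zero, ← withDensity_const]
  refine withDensity_mono (ae_of_all _ fun x => ?_)
  calc gaussianPDF μ 1 x ≤ ENNReal.ofReal (1 / 2) :=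
        ENNReal.ofReal_le_ofReal (gaussianPDFReal_one_le_half μ x)
    _ = 2⁻¹ := by rw [one_div, ENNReal.ofReal_inv_of_pos two_pos, ENNReal.ofReal_ofNat]

lemma gaussianReal_one_ball_le (μ x δ : ℝ) :
    gaussianReal μ 1 (Metric.ball x δ) ≤ ENNReal.ofReal δ :=
  calc gaussianReal μ 1 (Metric.ball x δ) ≤ 2⁻¹ * ENNReal.ofReal (2 * δ) := by
        simpa [Real.volume_ball] using gaussianReal_one_le_smul_volume μ (Metric.ball x δ)
    _ = ENNReal.ofReal δ := by
        rw [ENNReal.ofReal_mul zero_le_two, ENNReal.ofReal_ofNat,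
          ENNReal.inv_mul_cancel_left two_ne_zero ENNReal.ofNat_ne_top]

lemma two_mul_ofReal_two_rpow_neg_lt_one {x : ℝ} (hx : 1 < x) :
    2 * ENNReal.ofReal ((2 : ℝ) ^ (-x)) < 1 := by
  have h : (2 : ℝ) ^ (-x) < 2 ^ (-1 : ℝ) :=
    Real.rpow_lt_rpow_of_exponent_lt one_lt_two (neg_lt_neg hx)
  rw [Real.rpow_neg_one] at h
  rw [← ENNReal.ofReal_ofNat 2, ← ENNReal.ofReal_mul zero_le_two, ENNReal.ofReal_lt_one]
  linarith

def IsBranch (b : ℕ → ℕ) : Prop :=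
  b 0 = 0 ∧ ∀ n, b (n + 1) = 2 * b n ∨ b (n + 1) = 2 * b n + 1

namespace IsBranch

variable {b : ℕ → ℕ}

lemma lt_two_pow (hb : IsBranch b) (n : ℕ) : b n < 2 ^ n := by
  induction n with
  | zero => simp [hb.1]
  | succ n ih => rcases hb.2 n with h | h <;> rw [h, pow_succ] <;> omega

lemma div_two_pow (hb : IsBranch b) (n k : ℕ) : b (n + k) / 2 ^ k = b n := by
  induction k with
  | zero => simp
  | succ k ih =>
    have hparent : b (n + k + 1) / 2 = b (n + k) := by rcases hb.2 (n + k) with h | h <;> omega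
    rw [← add_assoc, pow_succ', ← Nat.div_div_eq_div_mul, hparent, ih]

end IsBranch

section Percolation

variable {Ω : Type*}

/-- The ancestor at level `L + n` of the vertex `(L + k, j)` is `(L + n, j / 2 ^ (k - n))`. -/
def pathEvent (A : ℕ × ℕ → Set Ω) (L k j : ℕ) : Set Ω :=
  ⋂ n ∈ Finset.range (k + 1), A (L + n, j / 2 ^ (k - n))

lemma setOf_exists_isBranch_subset_biUnion_pathEvent (A : ℕ × ℕ → Set Ω) (L k : ℕ) :
    {ω | ∃ b, IsBranch b ∧ ∀ n ≥ L, ω ∈ A (n, b n)} ⊆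
      ⋃ j ∈ Finset.range (2 ^ (L + k)), pathEvent A L k j := by
  rintro ω ⟨b, hb, hmem⟩
  refine mem_iUnion₂.2 ⟨b (L + k), Finset.mem_range.2 (hb.lt_two_pow _), mem_iInter₂.2 ?_⟩
  intro n hn
  have hnk : L + n + (k - n) = L + k := by rw [Finset.mem_range] at hn; omega
  rw [← hnk, hb.div_two_pow]
  exact hmem _ (Nat.le_add_right L n)

variable [MeasurableSpace Ω] {P : Measure Ω}

lemma measure_pathEvent_le {A : ℕ × ℕ → Set Ω} (hA : iIndepSet A P) {δ : ℝ≥0∞} {L : ℕ}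
    (hAδ : ∀ n ≥ L, ∀ i, P (A (n, i)) ≤ δ) (k j : ℕ) :
    P (pathEvent A L k j) ≤ δ ^ (k + 1) := by
  have hinj : Function.Injective fun n => (L + n, j / 2 ^ (k - n)) :=
    fun n m h => Nat.add_left_cancel (congrArg Prod.fst h)
  calc P (pathEvent A L k j) = ∏ n ∈ Finset.range (k + 1), P (A (L + n, j / 2 ^ (k - n))) :=
        (hA.precomp hinj).meas_biInter _
    _ ≤ ∏ _n ∈ Finset.range (k + 1), δ :=
        Finset.prod_le_prod' fun n _ => hAδ _ (Nat.le_add_right L n) _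
    _ = δ ^ (k + 1) := by rw [Finset.prod_const, Finset.card_range]

theorem measure_setOf_exists_isBranch_forall_ge_mem_eq_zero {A : ℕ × ℕ → Set Ω}
    (hA : iIndepSet A P) {δ : ℝ≥0∞} (hδ : 2 * δ < 1) {L : ℕ}
    (hAδ : ∀ n ≥ L, ∀ i, P (A (n, i)) ≤ δ) :
    P {ω | ∃ b, IsBranch b ∧ ∀ n ≥ L, ω ∈ A (n, b n)} = 0 := by
  have hbound : ∀ k, P {ω | ∃ b, IsBranch b ∧ ∀ n ≥ L, ω ∈ A (n, b n)} ≤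
      2 ^ L * δ * (2 * δ) ^ k := fun k =>
    calc _ ≤ P (⋃ j ∈ Finset.range (2 ^ (L + k)), pathEvent A L k j) :=
          measure_mono (setOf_exists_isBranch_subset_biUnion_pathEvent A L k)
      _ ≤ ∑ j ∈ Finset.range (2 ^ (L + k)), P (pathEvent A L k j) :=
          measure_biUnion_finset_le _ _
      _ ≤ ∑ _j ∈ Finset.range (2 ^ (L + k)), δ ^ (k + 1) :=
          Finset.sum_le_sum fun j _ => measure_pathEvent_le hA hAδ k j
      _ = 2 ^ L * δ * (2 * δ) ^ k := by
          rw [Finset.sum_const, Finset.card_range, nsmul_eq_mul]; push_cast; ring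
  have hδ_top : 2 ^ L * δ ≠ ⊤ := by
    have : δ ≠ ⊤ := fun h => by simp [h] at hδ
    finiteness
  have hlim : Tendsto (fun k : ℕ => 2 ^ L * δ * (2 * δ) ^ k) atTop (𝓝 0) := by
    simpa using ENNReal.Tendsto.const_mul (ENNReal.tendsto_pow_atTop_nhds_zero_of_lt_one hδ)
      (Or.inr hδ_top)
  exact le_antisymm (ge_of_tendsto' hlim hbound) bot_le

lemma measure_preimage_ball_le_of_map_eq_gaussianReal {X : Ω → ℝ} (hX : Measurable X) {μ : ℝ}
    (hXP : P.map X = gaussianReal μ 1) (x δ : ℝ) :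
    P (X ⁻¹' Metric.ball x δ) ≤ ENNReal.ofReal δ := by
  rw [← Measure.map_apply hX Metric.isOpen_ball.measurableSet, hXP]
  exact gaussianReal_one_ball_le μ x δ

lemma ProbabilityTheory.iIndepFun.iIndepSet_preimage {ι β : Type*} [MeasurableSpace β]
    {f : ι → Ω → β} (hf : iIndepFun f P) (hfm : ∀ i, Measurable (f i)) {s : ι → Set β}
    (hs : ∀ i, MeasurableSet (s i)) : iIndepSet (fun i => f i ⁻¹' s i) P :=
  hf.iIndep.iIndepSets'.iIndepSet_of_mem
    (fun i => MeasurableSet.preimage (hs i) (comap_measurable (f i))) fun i => hfm i (hs i)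

theorem measure_setOf_exists_isBranch_forall_ge_abs_lt_eq_zero {ξ : ℕ × ℕ → Ω → ℝ}
    (hmeas : ∀ p, Measurable (ξ p)) (hdist : ∀ p, P.map (ξ p) = gaussianReal 0 1)
    (hindep : iIndepFun ξ P) {ε : ℝ} (hε : 0 < ε) (N : ℕ) :
    P {ω | ∃ b, IsBranch b ∧ ∀ n ≥ N, |ξ (n, b n) ω| < (2 : ℝ) ^ (-(ε * n))} = 0 := by
  set A : ℕ × ℕ → Set Ω := fun p => ξ p ⁻¹' Metric.ball 0 ((2 : ℝ) ^ (-(ε * p.1)))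
  obtain ⟨L, hL⟩ := exists_nat_gt ε⁻¹
  have hεL : 1 < ε * L := by rwa [inv_lt_iff_one_lt_mul₀' hε] at hL
  have hAδ : ∀ n ≥ max N L, ∀ i, P (A (n, i)) ≤ ENNReal.ofReal ((2 : ℝ) ^ (-(ε * L))) := by
    intro n hn i
    have hLn : (L : ℝ) ≤ n := by exact_mod_cast (le_max_right N L).trans hn
    calc P (A (n, i)) ≤ ENNReal.ofReal ((2 : ℝ) ^ (-(ε * n))) :=
          measure_preimage_ball_le_of_map_eq_gaussianReal (hmeas _) (hdist _) _ _
      _ ≤ ENNReal.ofReal ((2 : ℝ) ^ (-(ε * L))) := ENNReal.ofReal_le_ofReal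
          (Real.rpow_le_rpow_of_exponent_le one_le_two (by nlinarith))
  have hA : iIndepSet A P :=
    hindep.iIndepSet_preimage hmeas fun _ => Metric.isOpen_ball.measurableSet
  refine measure_mono_null ?_ (measure_setOf_exists_isBranch_forall_ge_mem_eq_zero hA
    (two_mul_ofReal_two_rpow_neg_lt_one hεL) hAδ)
  rintro ω ⟨b, hb, hlt⟩
  refine ⟨b, hb, fun n hn => ?_⟩
  simpa [A, Real.dist_0_eq_abs] using hlt n ((le_max_left N L).trans hn)

end Percolation

theorem stmt18_general {Ω : Type*} [MeasurableSpace Ω] (P : Measure Ω)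
    (ξ : ℕ × ℕ → Ω → ℝ) (hmeas : ∀ p, Measurable (ξ p))
    (hdist : ∀ p : ℕ × ℕ, Measure.map (ξ p) P = gaussianReal 0 1)
    (hindep : iIndepFun ξ P)
    (ε : ℝ) (hε : 0 < ε) :
    ∀ᵐ ω ∂P, ∀ b : ℕ → ℕ, b 0 = 0 →
      (∀ n, b (n + 1) = 2 * b n ∨ b (n + 1) = 2 * b n + 1) →
      {n : ℕ | (2 : ℝ) ^ (-(ε * (n : ℝ))) ≤ |ξ (n, b n) ω|}.Infinite := by
  have hnull : ∀ N, ∀ᵐ ω ∂P,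
      ω ∉ {ω | ∃ b, IsBranch b ∧ ∀ n ≥ N, |ξ (n, b n) ω| < (2 : ℝ) ^ (-(ε * n))} := fun N =>
    measure_eq_zero_iff_ae_notMem.1
      (measure_setOf_exists_isBranch_forall_ge_abs_lt_eq_zero hmeas hdist hindep hε N)
  filter_upwards [ae_all_iff.2 hnull] with ω hω b hb0 hstep
  by_contra hfin
  obtain ⟨N, hN⟩ := (Set.not_infinite.1 hfin).bddAbove
  exact hω (N + 1) ⟨b, ⟨hb0, hstep⟩, fun n hn => not_le.1 fun h => not_le.2 hn (hN h)⟩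

/-- attach i.i.d. standard normal random variables to the vertices of the
infinite binary tree; a vertex at level `n` is exceptional if its variable has absolute value
less than `2^{-εn}`. Almost surely, every infinite branch contains infinitely many
non-exceptional vertices. -/
theorem stmt18 {Ω : Type*} [MeasurableSpace Ω] (P : Measure Ω) [IsProbabilityMeasure P]
    (ξ : ℕ × ℕ → Ω → ℝ) (hmeas : ∀ p, Measurable (ξ p))
    (hdist : ∀ p : ℕ × ℕ, Measure.map (ξ p) P = gaussianReal 0 1)
    (hindep : iIndepFun ξ P)
    (ε : ℝ) (hε : 0 < ε) :
    ∀ᵐ ω ∂P, ∀ b : ℕ → ℕ, b 0 = 0 →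
      (∀ n, b (n + 1) = 2 * b n ∨ b (n + 1) = 2 * b n + 1) →
      {n : ℕ | (2 : ℝ) ^ (-(ε * (n : ℝ))) ≤ |ξ (n, b n) ω|}.Infinite :=
  stmt18_general P ξ hmeas hdist hindep ε hε
end
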